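/- arXiv:2005.09681 — 10 statements merged into one kernel-verified Lean document; each statement's English description precedes it below -/
import Mathlib

section
/- For every example i ∈ {1,…,n}, the fine-class softmax probability is lower bounded by P_F(i) ≥ z · exp(⟪f_i, w̄_{y^F(i)} − w_i⟫) · P_I(i). -/
open Finset Real
open scoped RealInnerProductSpace BigOperators

/-- For every example `i`, the fine-class softmax probability is lower bounded by
`P_F(i) ≥ z · exp(⟪f_i, w̄_{y^F(i)} − w_i⟫) · P_I(i)`. -/
theorem fine_prob_ge_of_instance_prob
    {d n F z : ℕ} (hz : 0 < z) (hzF : z * F = n)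
    (f w : Fin n → EuclideanSpace ℝ (Fin d))
    (yF : Fin n → Fin F)
    (hcard : ∀ s : Fin F, (Finset.univ.filter (fun j => yF j = s)).card = z)
    (wbar : Fin F → EuclideanSpace ℝ (Fin d))
    (hwbar : ∀ s : Fin F,
      wbar s = (z : ℝ)⁻¹ • ∑ j ∈ Finset.univ.filter (fun j => yF j = s), w j)
    (PI PF : Fin n → ℝ)
    (hPI : ∀ i, PI i = Real.exp ⟪f i, w i⟫ / ∑ j, Real.exp ⟪f i, w j⟫)
    (hPF : ∀ i, PF i = Real.exp ⟪f i, wbar (yF i)⟫ / ∑ s, Real.exp ⟪f i, wbar s⟫) :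
    ∀ i, PF i ≥ (z : ℝ) * Real.exp ⟪f i, wbar (yF i) - w i⟫ * PI i := by
  intro i
  have hzR : (0 : ℝ) < z := by exact_mod_cast hz
  -- inner product with fine-class mean is an average
  have hinner : ∀ s : Fin F,
      ⟪f i, wbar s⟫ = ∑ j ∈ Finset.univ.filter (fun j => yF j = s),
        (z : ℝ)⁻¹ • ⟪f i, w j⟫ := by
    intro s
    rw [hwbar, inner_smul_right, inner_sum]
    simp [Finset.mul_sum]
  -- Jensen's inequality for each fine class
  have hjen : ∀ s : Fin F,
      Real.exp ⟪f i, wbar s⟫ ≤ ∑ j ∈ Finset.univ.filter (fun j => yF j = s),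
        (z : ℝ)⁻¹ • Real.exp ⟪f i, w j⟫ := by
    intro s
    rw [hinner s]
    exact convexOn_exp.map_sum_le (fun _ _ => by positivity)
      (by simp [hcard s, Finset.sum_const, mul_inv_cancel₀ hzR.ne']) (fun _ _ => trivial)
  -- sum over fine classes
  have hsum : (∑ s, Real.exp ⟪f i, wbar s⟫) ≤ (z : ℝ)⁻¹ * ∑ j, Real.exp ⟪f i, w j⟫ := by
    calc (∑ s, Real.exp ⟪f i, wbar s⟫)
        ≤ ∑ s, ∑ j ∈ Finset.univ.filter (fun j => yF j = s),
            (z : ℝ)⁻¹ • Real.exp ⟪f i, w j⟫ := Finset.sum_le_sum fun s _ => hjen s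
      _ = ∑ j, (z : ℝ)⁻¹ • Real.exp ⟪f i, w j⟫ := by
            rw [Finset.sum_fiberwise_eq_sum_filter Finset.univ Finset.univ yF]
            simp
      _ = (z : ℝ)⁻¹ * ∑ j, Real.exp ⟪f i, w j⟫ := by
            rw [← Finset.smul_sum]; simp
  have hDFpos : (0 : ℝ) < ∑ s, Real.exp ⟪f i, wbar s⟫ := by
    haveI : Nonempty (Fin F) := ⟨yF i⟩
    exact Finset.sum_pos (fun s _ => Real.exp_pos _) Finset.univ_nonempty
  have hDIpos : (0 : ℝ) < ∑ j, Real.exp ⟪f i, w j⟫ :=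
    Finset.sum_pos (fun j _ => Real.exp_pos _) ⟨i, Finset.mem_univ i⟩
  rw [hPF, hPI]
  have hrhs : (z : ℝ) * Real.exp ⟪f i, wbar (yF i) - w i⟫ *
      (Real.exp ⟪f i, w i⟫ / ∑ j, Real.exp ⟪f i, w j⟫)
      = Real.exp ⟪f i, wbar (yF i)⟫ / ((z : ℝ)⁻¹ * ∑ j, Real.exp ⟪f i, w j⟫) := by
    rw [inner_sub_right, Real.exp_sub]
    field_simp
  rw [ge_iff_le, hrhs]
  exact div_le_div_of_nonneg_left (Real.exp_pos _).le hDFpos hsum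
end

section
/- (Lemma 1) Let α > 0. If for every i ∈ {1,…,n} the instance-classification probability satisfies P_I(i) ≥ α, then for every i ∈ {1,…,n} the fine-class probability satisfies P_F(i) ≥ z · α · exp(⟪f_i, w̄_{y^F(i)} − w_i⟫). -/
open Finset Real
open scoped RealInnerProductSpace BigOperators

/-- Lemma 1: if every instance-classification probability is at least `α`,
then every fine-class probability satisfies
`P_F(i) ≥ z · α · exp(⟪f_i, w̄_{y^F(i)} − w_i⟫)`. -/
theorem lemma1_fine_prob_lower_bound
    {d n F z : ℕ} (hz : 0 < z) (hzF : z * F = n)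
    (f w : Fin n → EuclideanSpace ℝ (Fin d))
    (yF : Fin n → Fin F)
    (hcard : ∀ s : Fin F, (Finset.univ.filter (fun j => yF j = s)).card = z)
    (wbar : Fin F → EuclideanSpace ℝ (Fin d))
    (hwbar : ∀ s : Fin F,
      wbar s = (z : ℝ)⁻¹ • ∑ j ∈ Finset.univ.filter (fun j => yF j = s), w j)
    (PI PF : Fin n → ℝ)
    (hPI : ∀ i, PI i = Real.exp ⟪f i, w i⟫ / ∑ j, Real.exp ⟪f i, w j⟫)
    (hPF : ∀ i, PF i = Real.exp ⟪f i, wbar (yF i)⟫ / ∑ s, Real.exp ⟪f i, wbar s⟫)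
    (α : ℝ) (hα : 0 < α)
    (hPIα : ∀ i, PI i ≥ α) :
    ∀ i, PF i ≥ (z : ℝ) * α * Real.exp ⟪f i, wbar (yF i) - w i⟫ := by
  intro i
  have hzR : (0 : ℝ) < (z : ℝ) := by exact_mod_cast hz
  set S : ℝ := ∑ j, Real.exp ⟪f i, w j⟫ with hS
  set T : ℝ := ∑ s, Real.exp ⟪f i, wbar s⟫ with hT
  have hSpos : 0 < S := Finset.sum_pos (fun j _ => Real.exp_pos _) ⟨i, Finset.mem_univ i⟩
  have hTpos : 0 < T := Finset.sum_pos (fun s _ => Real.exp_pos _) ⟨yF i, Finset.mem_univ _⟩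
  -- Jensen: for each fine class s, exp⟪f i, wbar s⟫ ≤ z⁻¹ * ∑_{j : yF j = s} exp⟪f i, w j⟫
  have hjensen : ∀ s : Fin F, Real.exp ⟪f i, wbar s⟫ ≤
      (z : ℝ)⁻¹ * ∑ j ∈ Finset.univ.filter (fun j => yF j = s), Real.exp ⟪f i, w j⟫ := by
    intro s
    have hinner : ⟪f i, wbar s⟫ =
        ∑ j ∈ Finset.univ.filter (fun j => yF j = s), (z : ℝ)⁻¹ * ⟪f i, w j⟫ := by
      rw [hwbar s, inner_smul_right, inner_sum, Finset.mul_sum]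
    rw [hinner]
    have hconv := convexOn_exp.map_sum_le
      (t := Finset.univ.filter (fun j => yF j = s))
      (w := fun _ => (z : ℝ)⁻¹) (p := fun j => ⟪f i, w j⟫)
      (fun _ _ => by positivity)
      (by simp [hcard s, mul_comm, mul_inv_cancel₀ hzR.ne'])
      (fun _ _ => Set.mem_univ _)
    simpa [Finset.mul_sum, smul_eq_mul] using hconv
  have hTS : T ≤ (z : ℝ)⁻¹ * S := by
    have : T ≤ ∑ s, (z : ℝ)⁻¹ *
        ∑ j ∈ Finset.univ.filter (fun j => yF j = s), Real.exp ⟪f i, w j⟫ :=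
      Finset.sum_le_sum fun s _ => hjensen s
    refine this.trans_eq ?_
    rw [← Finset.mul_sum, hS]
    congr 1
    exact Finset.sum_fiberwise Finset.univ yF (fun j => Real.exp ⟪f i, w j⟫)
  set A : ℝ := ⟪f i, wbar (yF i)⟫
  set B : ℝ := ⟪f i, w i⟫
  have hinnersub : ⟪f i, wbar (yF i) - w i⟫ = A - B := inner_sub_right _ _ _
  have hαle : α ≤ Real.exp B / S := (hPI i ▸ hPIα i)
  have key : (z : ℝ) * α * Real.exp (A - B) ≤ Real.exp A / T := by
    have h1 : (z : ℝ) * α * Real.exp (A - B) ≤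
        (z : ℝ) * (Real.exp B / S) * Real.exp (A - B) := by
      have := mul_le_mul_of_nonneg_left hαle hzR.le
      exact mul_le_mul_of_nonneg_right this (Real.exp_pos _).le
    have h2 : (z : ℝ) * (Real.exp B / S) * Real.exp (A - B) = Real.exp A / ((z : ℝ)⁻¹ * S) := by
      have he : Real.exp B * Real.exp (A - B) = Real.exp A := by
        rw [← Real.exp_add]; congr 1; ring
      have l : (z : ℝ) * (Real.exp B / S) * Real.exp (A - B) = (z : ℝ) * Real.exp A / S := by
        rw [← he]; ring
      have r : Real.exp A / ((z : ℝ)⁻¹ * S) = (z : ℝ) * Real.exp A / S := by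
        field_simp
      rw [l, r]
    have h3 : Real.exp A / ((z : ℝ)⁻¹ * S) ≤ Real.exp A / T :=
      div_le_div_of_nonneg_left (Real.exp_pos _).le hTpos hTS
    exact h1.trans (h2.le.trans h3)
  rw [hPF i, hinnersub]
  exact key
end

section
/- Let f, v_1,…,v_m ∈ ℝ^d, let y ∈ {1,…,m}, let 0 < α < 1, a > 0 and c > 0 with ‖f‖ ≤ c and ‖v_y‖ ≤ c. If the softmax probability exp(⟪f, v_y⟫) / ∑_{j=1}^m exp(⟪f, v_j⟫) ≥ α and ∑_{j ≠ y} exp(⟪f, v_j⟫) ≥ a, then log(aα/(1−α)) ≤ c² and ‖v_y − f‖ ≤ √(2c² − 2 log(aα/(1−α))). -/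
open Finset Real
open scoped RealInnerProductSpace BigOperators

/-- with norm bounds `‖f‖ ≤ c`, `‖v_y‖ ≤ c`, a softmax probability at least `α`
and residual at least `a`, one has `log(aα/(1−α)) ≤ c²` and
`‖v_y − f‖ ≤ √(2c² − 2 log(aα/(1−α)))`. -/
theorem dist_to_weight_le_of_softmax_ge
    {d m : ℕ} (f : EuclideanSpace ℝ (Fin d)) (v : Fin m → EuclideanSpace ℝ (Fin d))
    (y : Fin m) (α a c : ℝ) (hα : 0 < α) (hα1 : α < 1) (ha : 0 < a) (hc : 0 < c)
    (hf : ‖f‖ ≤ c) (hvy : ‖v y‖ ≤ c)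
    (hsoftmax : Real.exp ⟪f, v y⟫ / ∑ j, Real.exp ⟪f, v j⟫ ≥ α)
    (hres : ∑ j ∈ Finset.univ.filter (fun j => j ≠ y), Real.exp ⟪f, v j⟫ ≥ a) :
    Real.log (a * α / (1 - α)) ≤ c ^ 2 ∧
      ‖v y - f‖ ≤ Real.sqrt (2 * c ^ 2 - 2 * Real.log (a * α / (1 - α))) := by
  set R := ∑ j ∈ Finset.univ.filter (fun j => j ≠ y), Real.exp ⟪f, v j⟫ with hR
  have hsplit : ∑ j, Real.exp ⟪f, v j⟫ = Real.exp ⟪f, v y⟫ + R := by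
    rw [hR, ← Finset.sum_filter_add_sum_filter_not Finset.univ (fun j => j = y)]
    congr 1
    rw [Finset.filter_eq', if_pos (Finset.mem_univ y), Finset.sum_singleton]
  have hSpos : 0 < ∑ j, Real.exp ⟪f, v j⟫ := by
    rw [hsplit]
    positivity
  have h1α : 0 < 1 - α := by linarith
  -- from the softmax bound
  have hkey : α * (Real.exp ⟪f, v y⟫ + R) ≤ Real.exp ⟪f, v y⟫ := by
    have h := (ge_iff_le.mp hsoftmax)
    have := (le_div_iff₀ hSpos).mp h
    rw [hsplit] at this
    linarith
  have hexp_ge : a * α / (1 - α) ≤ Real.exp ⟪f, v y⟫ := by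
    have hR_ge : a ≤ R := hres
    have : α * R ≤ (1 - α) * Real.exp ⟪f, v y⟫ := by nlinarith
    rw [div_le_iff₀ h1α]
    nlinarith
  have hpos : 0 < a * α / (1 - α) := by positivity
  have hlog : Real.log (a * α / (1 - α)) ≤ ⟪f, v y⟫ := by
    have := Real.log_le_log hpos hexp_ge
    rwa [Real.log_exp] at this
  have hinner_le : ⟪f, v y⟫ ≤ c ^ 2 := by
    have h1 := real_inner_le_norm f (v y)
    have h2 : ‖f‖ * ‖v y‖ ≤ c * c :=
      mul_le_mul hf hvy (norm_nonneg _) (le_of_lt hc)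
    nlinarith
  refine ⟨le_trans hlog hinner_le, ?_⟩
  have hsq : ‖v y - f‖ ^ 2 ≤ 2 * c ^ 2 - 2 * Real.log (a * α / (1 - α)) := by
    have hns : ‖v y - f‖ ^ 2 = ‖v y‖ ^ 2 - 2 * ⟪v y, f⟫ + ‖f‖ ^ 2 := by
      rw [@norm_sub_sq_real]
    have hsymm : ⟪v y, f⟫ = ⟪f, v y⟫ := real_inner_comm _ _
    have h1 : ‖v y‖ ^ 2 ≤ c ^ 2 := by nlinarith [norm_nonneg (v y)]
    have h2 : ‖f‖ ^ 2 ≤ c ^ 2 := by nlinarith [norm_nonneg f]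
    rw [hns, hsymm]
    linarith
  calc ‖v y - f‖ = Real.sqrt (‖v y - f‖ ^ 2) := by
        rw [Real.sqrt_sq (norm_nonneg _)]
    _ ≤ Real.sqrt (2 * c ^ 2 - 2 * Real.log (a * α / (1 - α))) :=
        Real.sqrt_le_sqrt hsq
end

section
/- Let 0 < β < 1, b > 0 and c > 0, and let i, j ∈ {1,…,n} be two examples in the same coarse class, y^C(i) = y^C(j) = k. Suppose ‖f_i‖ ≤ c, ‖f_j‖ ≤ c, ‖u_k‖ ≤ c, the coarse-classification probabilities satisfy P_C(i) ≥ β and P_C(j) ≥ β, and the residuals satisfy ∑_{k' ≠ k} exp(⟪f_i, u_{k'}⟫) ≥ b and ∑_{k' ≠ k} exp(⟪f_j, u_{k'}⟫) ≥ b. Then ‖f_j − f_i‖ ≤ 2√(2c² − 2 log(bβ/(1−β))) and consequently ⟪f_i, f_j⟫ − ‖f_i‖² ≥ −2c√(2c² − 2 log(bβ/(1−β))). -/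
open Finset Real
open scoped RealInnerProductSpace BigOperators

lemma aux_close_to_center {d C : ℕ} (v : EuclideanSpace ℝ (Fin d))
    (u : Fin C → EuclideanSpace ℝ (Fin d)) (k : Fin C)
    (β b c : ℝ) (hβ : 0 < β) (hβ1 : β < 1) (hb : 0 < b) (hc : 0 < c)
    (hv : ‖v‖ ≤ c) (huk : ‖u k‖ ≤ c)
    (hP : β ≤ Real.exp ⟪v, u k⟫ / ∑ k', Real.exp ⟪v, u k'⟫)
    (hres : ∑ k' ∈ Finset.univ.filter (fun k' => k' ≠ k), Real.exp ⟪v, u k'⟫ ≥ b) :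
    ‖v - u k‖ ≤ Real.sqrt (2 * c ^ 2 - 2 * Real.log (b * β / (1 - β))) := by
  set E := Real.exp ⟪v, u k⟫ with hE
  set R := ∑ k' ∈ Finset.univ.filter (fun k' => k' ≠ k), Real.exp ⟪v, u k'⟫ with hR
  have hsum : ∑ k', Real.exp ⟪v, u k'⟫ = E + R := by
    rw [hR, Finset.filter_ne', hE]
    exact (Finset.add_sum_erase _ _ (Finset.mem_univ k)).symm
  have hEpos : 0 < E := Real.exp_pos _
  have hSpos : 0 < E + R := by positivity
  have hβE : β * (E + R) ≤ E := by
    rw [hsum] at hP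
    calc β * (E + R) ≤ (E / (E + R)) * (E + R) := by
          apply mul_le_mul_of_nonneg_right hP hSpos.le
      _ = E := div_mul_cancel₀ _ hSpos.ne'
  have hβ' : 0 < 1 - β := by linarith
  have hkey : b * β / (1 - β) ≤ E := by
    rw [div_le_iff₀ (by linarith)]
    nlinarith
  have hL : Real.log (b * β / (1 - β)) ≤ ⟪v, u k⟫ := by
    have h : Real.log (b * β / (1 - β)) ≤ Real.log (Real.exp ⟪v, u k⟫) :=
      Real.log_le_log (by positivity) hkey
    rwa [Real.log_exp] at h
  have hsq : ‖v - u k‖ ^ 2 ≤ 2 * c ^ 2 - 2 * Real.log (b * β / (1 - β)) := by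
    have hns : ‖v - u k‖ ^ 2 = ‖v‖ ^ 2 - 2 * ⟪v, u k⟫ + ‖u k‖ ^ 2 := by
      exact norm_sub_sq_real v (u k)
    nlinarith [norm_nonneg v, norm_nonneg (u k)]
  calc ‖v - u k‖ = Real.sqrt (‖v - u k‖ ^ 2) := by
        rw [Real.sqrt_sq (norm_nonneg _)]
    _ ≤ _ := Real.sqrt_le_sqrt hsq

/-- for two examples `i, j` in the same coarse class `k`, with norm bounds,
coarse probabilities at least `β`, and residuals at least `b`, one has
`‖f_j − f_i‖ ≤ 2√(2c² − 2 log(bβ/(1−β)))` and consequently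
`⟪f_i, f_j⟫ − ‖f_i‖² ≥ −2c√(2c² − 2 log(bβ/(1−β)))`. -/
theorem same_coarse_class_close
    {d n C : ℕ} (f : Fin n → EuclideanSpace ℝ (Fin d))
    (yC : Fin n → Fin C)
    (u : Fin C → EuclideanSpace ℝ (Fin d))
    (PC : Fin n → ℝ)
    (hPC : ∀ i, PC i = Real.exp ⟪f i, u (yC i)⟫ / ∑ k, Real.exp ⟪f i, u k⟫)
    (β b c : ℝ) (hβ : 0 < β) (hβ1 : β < 1) (hb : 0 < b) (hc : 0 < c)
    (i j : Fin n) (k : Fin C) (hik : yC i = k) (hjk : yC j = k)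
    (hfi : ‖f i‖ ≤ c) (hfj : ‖f j‖ ≤ c) (huk : ‖u k‖ ≤ c)
    (hPCi : PC i ≥ β) (hPCj : PC j ≥ β)
    (hresi : ∑ k' ∈ Finset.univ.filter (fun k' => k' ≠ k), Real.exp ⟪f i, u k'⟫ ≥ b)
    (hresj : ∑ k' ∈ Finset.univ.filter (fun k' => k' ≠ k), Real.exp ⟪f j, u k'⟫ ≥ b) :
    ‖f j - f i‖ ≤ 2 * Real.sqrt (2 * c ^ 2 - 2 * Real.log (b * β / (1 - β))) ∧
      ⟪f i, f j⟫ - ‖f i‖ ^ 2 ≥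
        -2 * c * Real.sqrt (2 * c ^ 2 - 2 * Real.log (b * β / (1 - β))) := by
  have hPi := hPCi; rw [hPC i, hik] at hPi
  have hPj := hPCj; rw [hPC j, hjk] at hPj
  have hi := aux_close_to_center (f i) u k β b c hβ hβ1 hb hc hfi huk hPi hresi
  have hj := aux_close_to_center (f j) u k β b c hβ hβ1 hb hc hfj huk hPj hresj
  have hdist : ‖f j - f i‖ ≤ 2 * Real.sqrt (2 * c ^ 2 - 2 * Real.log (b * β / (1 - β))) := by
    calc ‖f j - f i‖ = ‖(f j - u k) + (u k - f i)‖ := by rw [sub_add_sub_cancel]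
      _ ≤ ‖f j - u k‖ + ‖u k - f i‖ := norm_add_le _ _
      _ = ‖f j - u k‖ + ‖f i - u k‖ := by rw [norm_sub_rev (u k)]
      _ ≤ _ := by linarith
  refine ⟨hdist, ?_⟩
  have h1 : ⟪f i, f j⟫ - ‖f i‖ ^ 2 = ⟪f i, f j - f i⟫ := by
    rw [inner_sub_right, real_inner_self_eq_norm_sq]
  have h2 : |⟪f i, f j - f i⟫| ≤ ‖f i‖ * ‖f j - f i‖ := abs_real_inner_le_norm _ _
  have h3 : ‖f i‖ * ‖f j - f i‖ ≤ c * (2 * Real.sqrt (2 * c ^ 2 - 2 * Real.log (b * β / (1 - β)))) :=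
    mul_le_mul hfi hdist (norm_nonneg _) hc.le
  have := neg_abs_le ⟪f i, f j - f i⟫
  rw [ge_iff_le, h1]
  nlinarith [abs_nonneg ⟪f i, f j - f i⟫]
end

section
/- Assume 0 < α < 1, 0 < β < 1, a > 0, b > 0, c > 0, and that ‖f_i‖ ≤ c, ‖w_j‖ ≤ c, ‖u_k‖ ≤ c for all i, j, k. Assume that for every i: P_I(i) ≥ α, P_C(i) ≥ β, ∑_{j ≠ i} exp(⟪f_i, w_j⟫) ≥ a, and ∑_{k ≠ y^C(i)} exp(⟪f_i, u_k⟫) ≥ b. Set A = 2c² − 2 log(aα/(1−α)) and B = 2c² − 2 log(bβ/(1−β)). Then for every i and every j in the same fine class as i (y^F(j) = y^F(i)), one has ⟪f_i, w_j⟫ − ⟪f_i, w_i⟫ ≥ −2c(√A + √B). -/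
open Finset Real
open scoped RealInnerProductSpace BigOperators

/-- under instance- and coarse-classification guarantees, for every `i` and every
`j` in the same fine class as `i`, `⟪f_i, w_j⟫ − ⟪f_i, w_i⟫ ≥ −2c(√A + √B)` where
`A = 2c² − 2 log(aα/(1−α))` and `B = 2c² − 2 log(bβ/(1−β))`. -/
theorem same_fine_class_inner_diff_lower_bound
    {d n F C z : ℕ} (hz : 0 < z) (hzF : z * F = n)
    (f w : Fin n → EuclideanSpace ℝ (Fin d))
    (yF : Fin n → Fin F)
    (hcard : ∀ s : Fin F, (Finset.univ.filter (fun j => yF j = s)).card = z)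
    (yC : Fin n → Fin C)
    (hcompat : ∀ i j : Fin n, yF i = yF j → yC i = yC j)
    (u : Fin C → EuclideanSpace ℝ (Fin d))
    (PI PC : Fin n → ℝ)
    (hPI : ∀ i, PI i = Real.exp ⟪f i, w i⟫ / ∑ j, Real.exp ⟪f i, w j⟫)
    (hPC : ∀ i, PC i = Real.exp ⟪f i, u (yC i)⟫ / ∑ k, Real.exp ⟪f i, u k⟫)
    (α β a b c : ℝ)
    (hα : 0 < α) (hα1 : α < 1) (hβ : 0 < β) (hβ1 : β < 1)
    (ha : 0 < a) (hb : 0 < b) (hc : 0 < c)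
    (hfnorm : ∀ i, ‖f i‖ ≤ c) (hwnorm : ∀ j, ‖w j‖ ≤ c) (hunorm : ∀ k, ‖u k‖ ≤ c)
    (hPIα : ∀ i, PI i ≥ α) (hPCβ : ∀ i, PC i ≥ β)
    (hresI : ∀ i, ∑ j ∈ Finset.univ.filter (fun j => j ≠ i), Real.exp ⟪f i, w j⟫ ≥ a)
    (hresC : ∀ i, ∑ k ∈ Finset.univ.filter (fun k => k ≠ yC i), Real.exp ⟪f i, u k⟫ ≥ b)
    (A B : ℝ)
    (hA : A = 2 * c ^ 2 - 2 * Real.log (a * α / (1 - α)))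
    (hB : B = 2 * c ^ 2 - 2 * Real.log (b * β / (1 - β))) :
    ∀ i j : Fin n, yF j = yF i →
      ⟪f i, w j⟫ - ⟪f i, w i⟫ ≥ -2 * c * (Real.sqrt A + Real.sqrt B) := by
  -- generic softmax lower bound lemma
  have key : ∀ (m : ℕ) (v : Fin m → EuclideanSpace ℝ (Fin d)) (x : EuclideanSpace ℝ (Fin d))
      (i0 : Fin m) (γ s0 : ℝ), 0 < γ → γ < 1 → 0 < s0 →
      γ ≤ Real.exp ⟪x, v i0⟫ / ∑ j, Real.exp ⟪x, v j⟫ →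
      s0 ≤ ∑ j ∈ Finset.univ.filter (fun j => j ≠ i0), Real.exp ⟪x, v j⟫ →
      Real.log (s0 * γ / (1 - γ)) ≤ ⟪x, v i0⟫ := by
    intro m v x i0 γ s0 hγ hγ1 hs0 hdiv hsum
    set e := Real.exp ⟪x, v i0⟫ with he
    set S := ∑ j ∈ Finset.univ.filter (fun j => j ≠ i0), Real.exp ⟪x, v j⟫ with hS
    have hsplit : ∑ j, Real.exp ⟪x, v j⟫ = e + S := by
      rw [hS, show (Finset.univ.filter (fun j => j ≠ i0)) = Finset.univ.erase i0 from
        Finset.filter_ne' _ _]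
      exact (Finset.add_sum_erase _ _ (Finset.mem_univ i0)).symm
    have hepos : 0 < e := Real.exp_pos _
    have hT : 0 < e + S := by linarith
    rw [hsplit] at hdiv
    have h1 : γ * (e + S) ≤ e := (le_div_iff₀ hT).mp hdiv
    have h2 : s0 * γ / (1 - γ) ≤ e := by
      rw [div_le_iff₀ (by linarith)]
      nlinarith
    calc Real.log (s0 * γ / (1 - γ)) ≤ Real.log e :=
          Real.log_le_log (by have h3 : 0 < 1 - γ := (by linarith : (0:ℝ) < 1 - γ); positivity) h2
      _ = ⟪x, v i0⟫ := Real.log_exp _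
  have hdiag : ∀ i, Real.log (a * α / (1 - α)) ≤ ⟪f i, w i⟫ := by
    intro i
    refine key n w (f i) i α a hα hα1 ha ?_ (hresI i)
    rw [← hPI i]; exact hPIα i
  have hcoarse : ∀ i, Real.log (b * β / (1 - β)) ≤ ⟪f i, u (yC i)⟫ := by
    intro i
    refine key C u (f i) (yC i) β b hβ hβ1 hb ?_ (hresC i)
    rw [← hPC i]; exact hPCβ i
  have normA : ∀ i, ‖f i - w i‖ ≤ Real.sqrt A := by
    intro i
    have h1 : ‖f i - w i‖ ^ 2 ≤ A := by
      have hexp := norm_sub_sq_real (f i) (w i)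
      nlinarith [hfnorm i, hwnorm i, hdiag i, norm_nonneg (f i), norm_nonneg (w i)]
    calc ‖f i - w i‖ = Real.sqrt (‖f i - w i‖ ^ 2) := (Real.sqrt_sq (norm_nonneg _)).symm
      _ ≤ Real.sqrt A := Real.sqrt_le_sqrt h1
  have normB : ∀ i, ‖f i - u (yC i)‖ ≤ Real.sqrt B := by
    intro i
    have h1 : ‖f i - u (yC i)‖ ^ 2 ≤ B := by
      have hexp := norm_sub_sq_real (f i) (u (yC i))
      nlinarith [hfnorm i, hunorm (yC i), hcoarse i, norm_nonneg (f i), norm_nonneg (u (yC i))]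
    calc ‖f i - u (yC i)‖ = Real.sqrt (‖f i - u (yC i)‖ ^ 2) :=
          (Real.sqrt_sq (norm_nonneg _)).symm
      _ ≤ Real.sqrt B := Real.sqrt_le_sqrt h1
  intro i j hij
  have hcc : yC j = yC i := hcompat j i hij
  have hw : ‖w j - w i‖ ≤ 2 * (Real.sqrt A + Real.sqrt B) := by
    have t1 : dist (w j) (w i) ≤ dist (w j) (f j) + dist (f j) (u (yC i)) + dist (u (yC i)) (w i) :=
      dist_triangle4 _ _ _ _
    have t2 : dist (u (yC i)) (w i) ≤ dist (u (yC i)) (f i) + dist (f i) (w i) :=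
      dist_triangle _ _ _
    have e1 : dist (w j) (f j) ≤ Real.sqrt A := by
      rw [dist_eq_norm, norm_sub_rev]; exact normA j
    have e2 : dist (f j) (u (yC i)) ≤ Real.sqrt B := by
      rw [dist_eq_norm, ← hcc]; exact normB j
    have e3 : dist (u (yC i)) (f i) ≤ Real.sqrt B := by
      rw [dist_eq_norm, norm_sub_rev]; exact normB i
    rw [show ‖w j - w i‖ = dist (w j) (w i) from (dist_eq_norm _ _).symm]
    have e4' : dist (f i) (w i) ≤ Real.sqrt A := by
      rw [dist_eq_norm]; exact normA i
    linarith
  have hinner : ⟪f i, w j⟫ - ⟪f i, w i⟫ = ⟪f i, w j - w i⟫ := by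
    rw [inner_sub_right]
  rw [hinner]
  have habs : |⟪f i, w j - w i⟫| ≤ ‖f i‖ * ‖w j - w i‖ := abs_real_inner_le_norm _ _
  have hlow : -(‖f i‖ * ‖w j - w i‖) ≤ ⟪f i, w j - w i⟫ := neg_abs_le _ |>.trans' (by linarith [abs_nonneg ⟪f i, w j - w i⟫])
  have hnf : ‖f i‖ ≤ c := hfnorm i
  have h0 : (0:ℝ) ≤ ‖w j - w i‖ := norm_nonneg _
  have h0' : (0:ℝ) ≤ ‖f i‖ := norm_nonneg _
  nlinarith [neg_abs_le ⟪f i, w j - w i⟫, abs_real_inner_le_norm (f i) (w j - w i),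
    Real.sqrt_nonneg A, Real.sqrt_nonneg B]
end

section
/- Assume 0 < α < 1, 0 < β < 1, a > 0, b > 0, c > 0, and that ‖f_i‖ ≤ c, ‖w_j‖ ≤ c, ‖u_k‖ ≤ c for all i, j, k. Assume that for every i: P_I(i) ≥ α, P_C(i) ≥ β, ∑_{j ≠ i} exp(⟪f_i, w_j⟫) ≥ a, and ∑_{k ≠ y^C(i)} exp(⟪f_i, u_k⟫) ≥ b. Set A = 2c² − 2 log(aα/(1−α)) and B = 2c² − 2 log(bβ/(1−β)). Then for every i, ⟪f_i, w̄_{y^F(i)} − w_i⟫ ≥ −(2c(z−1)/z)(√A + √B). -/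
open Finset Real
open scoped RealInnerProductSpace BigOperators

/-!
A softmax probability `exp s / (exp s + R) ≥ α` with residual mass `R ≥ a` forces the logit
`s ≥ log (a α / (1 - α))`. Since `‖f - w‖² = ‖f‖² + ‖w‖² - 2⟪f, w⟫`, a large logit between
vectors of norm at most `c` places each representation `f_j` within `√A` of its instance weight
`w_j` and within `√B` of its coarse weight `u_{y^C(j)}`. Two examples `i, j` of the same fine class
share their coarse weight, so `‖w_j - w_i‖ ≤ 2(√A + √B)` through `f_j`, `u`, `f_i`. Averaging
`⟪f_i, w_j - w_i⟫ ≥ -c ‖w_j - w_i‖` over the fine class, where the term `j = i` vanishes,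
gives the factor `(z - 1) / z`.
-/

lemma mul_div_one_sub_le_of_le_div_add {e r a α : ℝ} (he : 0 < e) (ha : 0 < a) (hr : a ≤ r)
    (hα1 : α < 1) (h : α ≤ e / (e + r)) :
    a * α / (1 - α) ≤ e := by
  rw [le_div_iff₀ (by linarith)] at h
  rw [div_le_iff₀ (by linarith)]
  nlinarith

lemma log_le_of_le_softmax {ι : Type*} [Fintype ι] [DecidableEq ι] {s : ι → ℝ} {k : ι}
    {a α : ℝ} (ha : 0 < a) (hα : 0 < α) (hα1 : α < 1)
    (hres : a ≤ ∑ j ∈ univ.filter (fun j => j ≠ k), exp (s j))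
    (hprob : α ≤ exp (s k) / ∑ j, exp (s j)) :
    log (a * α / (1 - α)) ≤ s k := by
  rw [filter_ne'] at hres
  rw [← add_sum_erase _ _ (mem_univ k)] at hprob
  rw [← log_exp (s k)]
  exact log_le_log (div_pos (mul_pos ha hα) (sub_pos.2 hα1))
    (mul_div_one_sub_le_of_le_div_add (exp_pos _) ha hres hα1 hprob)

section InnerProductSpace

variable {E : Type*} [NormedAddCommGroup E] [InnerProductSpace ℝ E]

lemma norm_sub_le_sqrt_of_le_inner {x y : E} {c t : ℝ} (hx : ‖x‖ ≤ c) (hy : ‖y‖ ≤ c)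
    (ht : t ≤ ⟪x, y⟫) :
    ‖x - y‖ ≤ √(2 * c ^ 2 - 2 * t) := by
  apply le_sqrt_of_sq_le
  have hx2 : ‖x‖ ^ 2 ≤ c ^ 2 := pow_le_pow_left₀ (norm_nonneg x) hx 2
  have hy2 : ‖y‖ ^ 2 ≤ c ^ 2 := pow_le_pow_left₀ (norm_nonneg y) hy 2
  rw [norm_sub_sq_real]
  linarith

lemma neg_mul_norm_le_inner {x v : E} {c : ℝ} (hx : ‖x‖ ≤ c) : -(c * ‖v‖) ≤ ⟪x, v⟫ := by
  have := abs_real_inner_le_norm x v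
  have := mul_le_mul_of_nonneg_right hx (norm_nonneg v)
  linarith [neg_abs_le ⟪x, v⟫]

lemma le_inner_smul_sum_sub {ι : Type*} [DecidableEq ι] {T : Finset ι} {i : ι} (hi : i ∈ T)
    {x : E} {g : ι → E} {m : ℝ} (hm : ∀ j ∈ T, j ≠ i → m ≤ ⟪x, g j - g i⟫) :
    ((#T : ℝ) - 1) / #T * m ≤ ⟪x, (#T : ℝ)⁻¹ • ∑ j ∈ T, g j - g i⟫ := by
  have hT : (0 : ℝ) < #T := Nat.cast_pos.2 (card_pos.2 ⟨i, hi⟩)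
  have hmean : (#T : ℝ)⁻¹ • ∑ j ∈ T, g j - g i = (#T : ℝ)⁻¹ • ∑ j ∈ T, (g j - g i) := by
    rw [sum_sub_distrib, smul_sub, sum_const, ← Nat.cast_smul_eq_nsmul ℝ, smul_smul,
      inv_mul_cancel₀ hT.ne', one_smul]
  have hsum : ((#T : ℝ) - 1) * m ≤ ∑ j ∈ T, ⟪x, g j - g i⟫ := by
    rw [← add_sum_erase _ _ hi, sub_self, inner_zero_right, zero_add]
    have := card_nsmul_le_sum (T.erase i) _ m fun j hj => hm j (mem_of_mem_erase hj)
      (ne_of_mem_erase hj)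
    rwa [card_erase_of_mem hi, nsmul_eq_mul, Nat.cast_pred (card_pos.2 ⟨i, hi⟩)] at this
  rw [hmean, real_inner_smul_right, inner_sum, div_mul_eq_mul_div, div_eq_inv_mul]
  exact mul_le_mul_of_nonneg_left hsum (inv_nonneg.2 hT.le)

end InnerProductSpace

lemma norm_sub_le_two_mul_add {E : Type*} [SeminormedAddCommGroup E] {p p' q q' v : E}
    {r s : ℝ} (hp : ‖q - p‖ ≤ r) (hp' : ‖q' - p'‖ ≤ r) (hq : ‖q - v‖ ≤ s)
    (hq' : ‖q' - v‖ ≤ s) :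
    ‖p - p'‖ ≤ 2 * (r + s) := by
  have := norm_sub_le_norm_sub_add_norm_sub p q p'
  have := norm_sub_le_norm_sub_add_norm_sub q v p'
  have := norm_sub_le_norm_sub_add_norm_sub v q' p'
  rw [norm_sub_rev] at hp
  rw [norm_sub_rev] at hq'
  linarith

theorem mean_weight_inner_diff_lower_bound_general
    {d n F C z : ℕ}
    (f w : Fin n → EuclideanSpace ℝ (Fin d))
    (yF : Fin n → Fin F)
    (hcard : ∀ s : Fin F, (Finset.univ.filter (fun j => yF j = s)).card = z)
    (wbar : Fin F → EuclideanSpace ℝ (Fin d))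
    (hwbar : ∀ s : Fin F,
      wbar s = (z : ℝ)⁻¹ • ∑ j ∈ Finset.univ.filter (fun j => yF j = s), w j)
    (yC : Fin n → Fin C)
    (hcompat : ∀ i j : Fin n, yF i = yF j → yC i = yC j)
    (u : Fin C → EuclideanSpace ℝ (Fin d))
    (PI PC : Fin n → ℝ)
    (hPI : ∀ i, PI i = Real.exp ⟪f i, w i⟫ / ∑ j, Real.exp ⟪f i, w j⟫)
    (hPC : ∀ i, PC i = Real.exp ⟪f i, u (yC i)⟫ / ∑ k, Real.exp ⟪f i, u k⟫)
    (α β a b c : ℝ)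
    (hα : 0 < α) (hα1 : α < 1) (hβ : 0 < β) (hβ1 : β < 1)
    (ha : 0 < a) (hb : 0 < b)
    (hfnorm : ∀ i, ‖f i‖ ≤ c) (hwnorm : ∀ j, ‖w j‖ ≤ c) (hunorm : ∀ k, ‖u k‖ ≤ c)
    (hPIα : ∀ i, PI i ≥ α) (hPCβ : ∀ i, PC i ≥ β)
    (hresI : ∀ i, ∑ j ∈ Finset.univ.filter (fun j => j ≠ i), Real.exp ⟪f i, w j⟫ ≥ a)
    (hresC : ∀ i, ∑ k ∈ Finset.univ.filter (fun k => k ≠ yC i), Real.exp ⟪f i, u k⟫ ≥ b)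
    (A B : ℝ)
    (hA : A = 2 * c ^ 2 - 2 * Real.log (a * α / (1 - α)))
    (hB : B = 2 * c ^ 2 - 2 * Real.log (b * β / (1 - β))) :
    ∀ i : Fin n,
      ⟪f i, wbar (yF i) - w i⟫ ≥
        -(2 * c * ((z : ℝ) - 1) / (z : ℝ)) * (Real.sqrt A + Real.sqrt B) := by
  intro i
  have hnearI : ∀ j, ‖f j - w j‖ ≤ √A := fun j => hA ▸ norm_sub_le_sqrt_of_le_inner
    (hfnorm j) (hwnorm j) (log_le_of_le_softmax (s := fun k => ⟪f j, w k⟫) ha hα hα1 (hresI j) (hPI j ▸ hPIα j))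
  have hnearC : ∀ j, ‖f j - u (yC j)‖ ≤ √B := fun j => hB ▸ norm_sub_le_sqrt_of_le_inner
    (hfnorm j) (hunorm _) (log_le_of_le_softmax (s := fun k => ⟪f j, u k⟫) hb hβ hβ1 (hresC j) (hPC j ▸ hPCβ j))
  have hc : 0 ≤ c := (norm_nonneg _).trans (hfnorm i)
  have key := le_inner_smul_sum_sub (x := f i) (g := w) (m := -(c * (2 * (√A + √B))))
    (T := univ.filter fun j => yF j = yF i) (i := i) (by simp) fun j hj _ => by
      have hyC : yC j = yC i := hcompat j i (mem_filter.1 hj).2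
      have hclose := norm_sub_le_two_mul_add (hnearI j) (hnearI i) (hyC ▸ hnearC j)
        (hnearC i)
      exact (neg_le_neg (mul_le_mul_of_nonneg_left hclose hc)).trans
        (neg_mul_norm_le_inner (hfnorm i))
  rw [hcard] at key
  rw [hwbar, ge_iff_le]
  convert key using 1
  ring

/-- under instance- and coarse-classification guarantees, for every `i`,
`⟪f_i, w̄_{y^F(i)} − w_i⟫ ≥ −(2c(z−1)/z)(√A + √B)` where
`A = 2c² − 2 log(aα/(1−α))` and `B = 2c² − 2 log(bβ/(1−β))`. -/
theorem mean_weight_inner_diff_lower_bound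
    {d n F C z : ℕ} (hz : 0 < z) (hzF : z * F = n)
    (f w : Fin n → EuclideanSpace ℝ (Fin d))
    (yF : Fin n → Fin F)
    (hcard : ∀ s : Fin F, (Finset.univ.filter (fun j => yF j = s)).card = z)
    (wbar : Fin F → EuclideanSpace ℝ (Fin d))
    (hwbar : ∀ s : Fin F,
      wbar s = (z : ℝ)⁻¹ • ∑ j ∈ Finset.univ.filter (fun j => yF j = s), w j)
    (yC : Fin n → Fin C)
    (hcompat : ∀ i j : Fin n, yF i = yF j → yC i = yC j)
    (u : Fin C → EuclideanSpace ℝ (Fin d))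
    (PI PC : Fin n → ℝ)
    (hPI : ∀ i, PI i = Real.exp ⟪f i, w i⟫ / ∑ j, Real.exp ⟪f i, w j⟫)
    (hPC : ∀ i, PC i = Real.exp ⟪f i, u (yC i)⟫ / ∑ k, Real.exp ⟪f i, u k⟫)
    (α β a b c : ℝ)
    (hα : 0 < α) (hα1 : α < 1) (hβ : 0 < β) (hβ1 : β < 1)
    (ha : 0 < a) (hb : 0 < b) (hc : 0 < c)
    (hfnorm : ∀ i, ‖f i‖ ≤ c) (hwnorm : ∀ j, ‖w j‖ ≤ c) (hunorm : ∀ k, ‖u k‖ ≤ c)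
    (hPIα : ∀ i, PI i ≥ α) (hPCβ : ∀ i, PC i ≥ β)
    (hresI : ∀ i, ∑ j ∈ Finset.univ.filter (fun j => j ≠ i), Real.exp ⟪f i, w j⟫ ≥ a)
    (hresC : ∀ i, ∑ k ∈ Finset.univ.filter (fun k => k ≠ yC i), Real.exp ⟪f i, u k⟫ ≥ b)
    (A B : ℝ)
    (hA : A = 2 * c ^ 2 - 2 * Real.log (a * α / (1 - α)))
    (hB : B = 2 * c ^ 2 - 2 * Real.log (b * β / (1 - β))) :
    ∀ i : Fin n,
      ⟪f i, wbar (yF i) - w i⟫ ≥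
        -(2 * c * ((z : ℝ) - 1) / (z : ℝ)) * (Real.sqrt A + Real.sqrt B) :=
  mean_weight_inner_diff_lower_bound_general f w yF hcard wbar hwbar yC hcompat u PI PC hPI hPC α β
    a b c hα hα1 hβ hβ1 ha hb hfnorm hwnorm hunorm hPIα hPCβ hresI hresC A B hA hB
end

section
/- (Theorem 1) Assume 0 < α < 1, 0 < β < 1, a > 0, b > 0, c > 0, and that ‖f_i‖ ≤ c, ‖w_j‖ ≤ c, ‖u_k‖ ≤ c for all i, j, k. Assume that for every i: P_I(i) ≥ α, P_C(i) ≥ β, ∑_{j ≠ i} exp(⟪f_i, w_j⟫) ≥ a, and ∑_{k ≠ y^C(i)} exp(⟪f_i, u_k⟫) ≥ b. Then for every i, the fine-class probability satisfies P_F(i) ≥ α · z · h(c, α, β), where h(c, α, β) = exp( −(2c(z−1)/z) ( √(2c² − 2 log(aα/(1−α))) + √(2c² − 2 log(bβ/(1−β))) ) ). -/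
open Finset Real
open scoped RealInnerProductSpace BigOperators

private lemma exp_mean_le' {ι : Type*} (t : Finset ι) (g : ι → ℝ) (ht : 0 < t.card) :
    Real.exp ((t.card : ℝ)⁻¹ * ∑ j ∈ t, g j) ≤ (t.card : ℝ)⁻¹ * ∑ j ∈ t, Real.exp (g j) := by
  have hcpos : (0:ℝ) < t.card := by exact_mod_cast ht
  set m : ℝ := (t.card : ℝ)⁻¹ * ∑ j ∈ t, g j with hm
  have hcm : (t.card : ℝ) * m = ∑ j ∈ t, g j := by
    rw [hm]; field_simp
  have h1 : ∀ j ∈ t, Real.exp m * (1 + (g j - m)) ≤ Real.exp (g j) := by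
    intro j _
    have h2 : 1 + (g j - m) ≤ Real.exp (g j - m) := by
      have := Real.add_one_le_exp (g j - m); linarith
    calc Real.exp m * (1 + (g j - m)) ≤ Real.exp m * Real.exp (g j - m) :=
          mul_le_mul_of_nonneg_left h2 (Real.exp_pos m).le
      _ = Real.exp (g j) := by rw [← Real.exp_add]; ring_nf
  have key : Real.exp m * (t.card : ℝ) ≤ ∑ j ∈ t, Real.exp (g j) := by
    have hsum : ∑ j ∈ t, (1 + (g j - m)) = (t.card : ℝ) := by
      rw [Finset.sum_add_distrib, Finset.sum_sub_distrib, Finset.sum_const, Finset.sum_const]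
      simp only [nsmul_eq_mul, mul_one]
      linarith [hcm]
    calc Real.exp m * (t.card : ℝ) = ∑ j ∈ t, Real.exp m * (1 + (g j - m)) := by
          rw [← Finset.mul_sum, hsum]
      _ ≤ ∑ j ∈ t, Real.exp (g j) := Finset.sum_le_sum h1
  rw [inv_mul_eq_div, le_div_iff₀ hcpos]
  exact key

/-- Theorem 1: under instance- and coarse-classification guarantees, for every `i`,
`P_F(i) ≥ α · z · h(c, α, β)` where
`h(c, α, β) = exp(−(2c(z−1)/z)(√(2c² − 2 log(aα/(1−α))) + √(2c² − 2 log(bβ/(1−β)))))`. -/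
theorem theorem1_fine_prob_lower_bound
    {d n F C z : ℕ} (hz : 0 < z) (hzF : z * F = n)
    (f w : Fin n → EuclideanSpace ℝ (Fin d))
    (yF : Fin n → Fin F)
    (hcard : ∀ s : Fin F, (Finset.univ.filter (fun j => yF j = s)).card = z)
    (wbar : Fin F → EuclideanSpace ℝ (Fin d))
    (hwbar : ∀ s : Fin F,
      wbar s = (z : ℝ)⁻¹ • ∑ j ∈ Finset.univ.filter (fun j => yF j = s), w j)
    (yC : Fin n → Fin C)
    (hcompat : ∀ i j : Fin n, yF i = yF j → yC i = yC j)
    (u : Fin C → EuclideanSpace ℝ (Fin d))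
    (PI PC PF : Fin n → ℝ)
    (hPI : ∀ i, PI i = Real.exp ⟪f i, w i⟫ / ∑ j, Real.exp ⟪f i, w j⟫)
    (hPC : ∀ i, PC i = Real.exp ⟪f i, u (yC i)⟫ / ∑ k, Real.exp ⟪f i, u k⟫)
    (hPF : ∀ i, PF i = Real.exp ⟪f i, wbar (yF i)⟫ / ∑ s, Real.exp ⟪f i, wbar s⟫)
    (α β a b c : ℝ)
    (hα : 0 < α) (hα1 : α < 1) (hβ : 0 < β) (hβ1 : β < 1)
    (ha : 0 < a) (hb : 0 < b) (hc : 0 < c)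
    (hfnorm : ∀ i, ‖f i‖ ≤ c) (hwnorm : ∀ j, ‖w j‖ ≤ c) (hunorm : ∀ k, ‖u k‖ ≤ c)
    (hPIα : ∀ i, PI i ≥ α) (hPCβ : ∀ i, PC i ≥ β)
    (hresI : ∀ i, ∑ j ∈ Finset.univ.filter (fun j => j ≠ i), Real.exp ⟪f i, w j⟫ ≥ a)
    (hresC : ∀ i, ∑ k ∈ Finset.univ.filter (fun k => k ≠ yC i), Real.exp ⟪f i, u k⟫ ≥ b) :
    ∀ i : Fin n,
      PF i ≥ α * (z : ℝ) *
        Real.exp (-(2 * c * ((z : ℝ) - 1) / (z : ℝ)) *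
          (Real.sqrt (2 * c ^ 2 - 2 * Real.log (a * α / (1 - α))) +
            Real.sqrt (2 * c ^ 2 - 2 * Real.log (b * β / (1 - β))))) := by
  intro i
  have hz' : (0:ℝ) < z := by exact_mod_cast hz
  set RI : ℝ := Real.sqrt (2 * c ^ 2 - 2 * Real.log (a * α / (1 - α))) with hRI
  set RC : ℝ := Real.sqrt (2 * c ^ 2 - 2 * Real.log (b * β / (1 - β))) with hRC
  have hRInn : 0 ≤ RI := Real.sqrt_nonneg _
  have hRCnn : 0 ≤ RC := Real.sqrt_nonneg _
  -- Step A: key inner-product lower bounds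
  have hTw : ∀ j : Fin n, Real.log (a * α / (1 - α)) ≤ ⟪f j, w j⟫ := by
    intro j
    have hS : (0:ℝ) < ∑ k, Real.exp ⟪f j, w k⟫ :=
      Finset.sum_pos (fun k _ => Real.exp_pos _) ⟨j, Finset.mem_univ j⟩
    have h1 := hPIα j
    rw [hPI j, ge_iff_le, le_div_iff₀ hS] at h1
    have hsplit : ∑ k, Real.exp ⟪f j, w k⟫ =
        Real.exp ⟪f j, w j⟫ + ∑ k ∈ Finset.univ.filter (fun k => k ≠ j), Real.exp ⟪f j, w k⟫ := by
      rw [Finset.filter_ne']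
      exact (Finset.add_sum_erase Finset.univ (fun k => Real.exp ⟪f j, w k⟫)
        (Finset.mem_univ j)).symm
    have hres := hresI j
    have hexp : a * α / (1 - α) ≤ Real.exp ⟪f j, w j⟫ := by
      rw [div_le_iff₀ (by linarith)]
      nlinarith [Real.exp_pos ⟪f j, w j⟫]
    exact (Real.log_le_iff_le_exp (div_pos (by positivity) (by linarith))).2 hexp
  have hTu : ∀ j : Fin n, Real.log (b * β / (1 - β)) ≤ ⟪f j, u (yC j)⟫ := by
    intro j
    have hS : (0:ℝ) < ∑ k, Real.exp ⟪f j, u k⟫ :=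
      Finset.sum_pos (fun k _ => Real.exp_pos _) ⟨yC j, Finset.mem_univ _⟩
    have h1 := hPCβ j
    rw [hPC j, ge_iff_le, le_div_iff₀ hS] at h1
    have hsplit : ∑ k, Real.exp ⟪f j, u k⟫ =
        Real.exp ⟪f j, u (yC j)⟫ +
          ∑ k ∈ Finset.univ.filter (fun k => k ≠ yC j), Real.exp ⟪f j, u k⟫ := by
      rw [Finset.filter_ne']
      exact (Finset.add_sum_erase Finset.univ (fun k => Real.exp ⟪f j, u k⟫)
        (Finset.mem_univ (yC j))).symm
    have hres := hresC j
    have hexp : b * β / (1 - β) ≤ Real.exp ⟪f j, u (yC j)⟫ := by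
      rw [div_le_iff₀ (by linarith)]
      nlinarith [Real.exp_pos ⟪f j, u (yC j)⟫]
    exact (Real.log_le_iff_le_exp (div_pos (by positivity) (by linarith))).2 hexp
  -- Step B: norm bounds
  have hfw : ∀ j : Fin n, ‖f j - w j‖ ≤ RI := by
    intro j
    have hsq : ‖f j - w j‖ ^ 2 ≤ 2 * c ^ 2 - 2 * Real.log (a * α / (1 - α)) := by
      have hns := norm_sub_sq_real (f j) (w j)
      nlinarith [hfnorm j, hwnorm j, hTw j, norm_nonneg (f j), norm_nonneg (w j)]
    calc ‖f j - w j‖ = Real.sqrt (‖f j - w j‖ ^ 2) := (Real.sqrt_sq (norm_nonneg _)).symm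
      _ ≤ RI := Real.sqrt_le_sqrt hsq
  have hfu : ∀ j : Fin n, ‖f j - u (yC j)‖ ≤ RC := by
    intro j
    have hsq : ‖f j - u (yC j)‖ ^ 2 ≤ 2 * c ^ 2 - 2 * Real.log (b * β / (1 - β)) := by
      have hns := norm_sub_sq_real (f j) (u (yC j))
      nlinarith [hfnorm j, hunorm (yC j), hTu j, norm_nonneg (f j), norm_nonneg (u (yC j))]
    calc ‖f j - u (yC j)‖ = Real.sqrt (‖f j - u (yC j)‖ ^ 2) :=
          (Real.sqrt_sq (norm_nonneg _)).symm
      _ ≤ RC := Real.sqrt_le_sqrt hsq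
  -- Step C: pairwise inner-product bound within the fine class of i
  set D : ℝ := 2 * c * (RI + RC) with hD
  have hDnn : 0 ≤ D := by positivity
  have hww : ∀ j : Fin n, yF j = yF i → ⟪f i, w i - w j⟫ ≤ D := by
    intro j hj
    have hyc : yC j = yC i := hcompat j i hj
    have hnorm : ‖w i - w j‖ ≤ 2 * (RI + RC) := by
      have hdecomp : w i - w j = -(f i - w i) + (f i - u (yC i)) + -(f j - u (yC i)) + (f j - w j) := by
        abel
      rw [hdecomp]
      have h4 : ‖f j - u (yC i)‖ ≤ RC := by rw [← hyc]; exact hfu j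
      calc ‖-(f i - w i) + (f i - u (yC i)) + -(f j - u (yC i)) + (f j - w j)‖
          ≤ ‖-(f i - w i) + (f i - u (yC i)) + -(f j - u (yC i))‖ + ‖f j - w j‖ := norm_add_le _ _
        _ ≤ ‖-(f i - w i) + (f i - u (yC i))‖ + ‖-(f j - u (yC i))‖ + ‖f j - w j‖ := by
            have := norm_add_le (-(f i - w i) + (f i - u (yC i))) (-(f j - u (yC i)))
            linarith
        _ ≤ ‖-(f i - w i)‖ + ‖f i - u (yC i)‖ + ‖-(f j - u (yC i))‖ + ‖f j - w j‖ := by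
            have := norm_add_le (-(f i - w i)) (f i - u (yC i))
            linarith
        _ ≤ 2 * (RI + RC) := by
            rw [norm_neg, norm_neg]
            have := hfw i; have := hfu i; have := hfw j
            linarith
    calc ⟪f i, w i - w j⟫ ≤ ‖f i‖ * ‖w i - w j‖ := real_inner_le_norm _ _
      _ ≤ c * (2 * (RI + RC)) := by
          apply mul_le_mul (hfnorm i) hnorm (norm_nonneg _) hc.le
      _ = D := by rw [hD]; ring
  -- the fine class of i
  set t : Finset (Fin n) := Finset.univ.filter (fun j => yF j = yF i) with htdef
  have hit : i ∈ t := by simp [htdef]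
  have hcardt : t.card = z := hcard (yF i)
  set T : ℝ := ⟪f i, w i⟫ with hT
  have hinner_bar : ∀ s : Fin F,
      ⟪f i, wbar s⟫ = (z : ℝ)⁻¹ * ∑ j ∈ Finset.univ.filter (fun j => yF j = s), ⟪f i, w j⟫ := by
    intro s
    rw [hwbar s, real_inner_smul_right, inner_sum]
  -- Step D: numerator lower bound
  have hnum : T - ((z : ℝ) - 1) / (z : ℝ) * D ≤ ⟪f i, wbar (yF i)⟫ := by
    have hsum_le : ∑ j ∈ t, ⟪f i, w i - w j⟫ ≤ ((z : ℝ) - 1) * D := by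
      rw [← Finset.add_sum_erase _ _ hit]
      have h0 : ⟪f i, w i - w i⟫ = (0:ℝ) := by simp
      have h1 : ∑ j ∈ t.erase i, ⟪f i, w i - w j⟫ ≤ (t.erase i).card • D := by
        apply Finset.sum_le_card_nsmul
        intro j hj
        exact hww j (Finset.mem_filter.1 (Finset.mem_of_mem_erase hj)).2
      have hcarde : (t.erase i).card = z - 1 := by
        rw [Finset.card_erase_of_mem hit, hcardt]
      rw [hcarde, nsmul_eq_mul] at h1
      have hcast : ((z - 1 : ℕ) : ℝ) = (z : ℝ) - 1 := by
        rw [Nat.cast_sub hz]; simp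
      rw [hcast] at h1
      rw [h0]
      linarith [h1]
    have hsum_eq : ∑ j ∈ t, ⟪f i, w i - w j⟫ = (z : ℝ) * T - ∑ j ∈ t, ⟪f i, w j⟫ := by
      simp only [inner_sub_right]
      rw [Finset.sum_sub_distrib, Finset.sum_const, hcardt, nsmul_eq_mul]
    have h2 : (z : ℝ) * T - ((z : ℝ) - 1) * D ≤ ∑ j ∈ t, ⟪f i, w j⟫ := by
      rw [hsum_eq] at hsum_le; linarith
    rw [hinner_bar (yF i)]
    calc T - ((z : ℝ) - 1) / (z : ℝ) * D
        = (z : ℝ)⁻¹ * ((z : ℝ) * T - ((z : ℝ) - 1) * D) := by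
          field_simp
      _ ≤ (z : ℝ)⁻¹ * ∑ j ∈ t, ⟪f i, w j⟫ :=
          mul_le_mul_of_nonneg_left h2 (inv_nonneg.2 hz'.le)
  -- Step F: denominator upper bound
  have hden : ∑ s, Real.exp ⟪f i, wbar s⟫ ≤ (z : ℝ)⁻¹ * ∑ j, Real.exp ⟪f i, w j⟫ := by
    have h1 : ∀ s : Fin F, Real.exp ⟪f i, wbar s⟫ ≤
        (z : ℝ)⁻¹ * ∑ j ∈ Finset.univ.filter (fun j => yF j = s), Real.exp ⟪f i, w j⟫ := by
      intro s
      have hj := exp_mean_le' (Finset.univ.filter (fun j => yF j = s))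
        (fun j => ⟪f i, w j⟫) (by rw [hcard s]; exact hz)
      rw [hcard s] at hj
      rw [hinner_bar s]
      exact hj
    calc ∑ s, Real.exp ⟪f i, wbar s⟫
        ≤ ∑ s, (z : ℝ)⁻¹ * ∑ j ∈ Finset.univ.filter (fun j => yF j = s), Real.exp ⟪f i, w j⟫ :=
          Finset.sum_le_sum fun s _ => h1 s
      _ = (z : ℝ)⁻¹ * ∑ s, ∑ j ∈ Finset.univ.filter (fun j => yF j = s), Real.exp ⟪f i, w j⟫ := by
          rw [Finset.mul_sum]
      _ = (z : ℝ)⁻¹ * ∑ j, Real.exp ⟪f i, w j⟫ := by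
          rw [Finset.sum_fiberwise Finset.univ yF (fun j => Real.exp ⟪f i, w j⟫)]
  have hSpos : (0:ℝ) < ∑ j, Real.exp ⟪f i, w j⟫ :=
    Finset.sum_pos (fun k _ => Real.exp_pos _) ⟨i, Finset.mem_univ i⟩
  have hS_le : ∑ j, Real.exp ⟪f i, w j⟫ ≤ Real.exp T / α := by
    have h1 := hPIα i
    rw [hPI i, ge_iff_le, le_div_iff₀ hSpos] at h1
    rw [le_div_iff₀ hα]
    linarith
  -- conclusion
  have hDpos : (0:ℝ) < ∑ s, Real.exp ⟪f i, wbar s⟫ :=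
    Finset.sum_pos (fun k _ => Real.exp_pos _) ⟨yF i, Finset.mem_univ _⟩
  rw [hPF i, ge_iff_le, le_div_iff₀ hDpos]
  have hEnn : (0:ℝ) ≤ Real.exp (-(2 * c * ((z : ℝ) - 1) / (z : ℝ)) * (RI + RC)) :=
    (Real.exp_pos _).le
  calc α * (z : ℝ) * Real.exp (-(2 * c * ((z : ℝ) - 1) / (z : ℝ)) * (RI + RC)) *
        (∑ s, Real.exp ⟪f i, wbar s⟫)
      ≤ α * (z : ℝ) * Real.exp (-(2 * c * ((z : ℝ) - 1) / (z : ℝ)) * (RI + RC)) *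
        ((z : ℝ)⁻¹ * (Real.exp T / α)) := by
        apply mul_le_mul_of_nonneg_left
        · exact hden.trans (mul_le_mul_of_nonneg_left hS_le (inv_nonneg.2 hz'.le))
        · positivity
    _ = Real.exp (-(2 * c * ((z : ℝ) - 1) / (z : ℝ)) * (RI + RC)) * Real.exp T := by
        field_simp
    _ = Real.exp (T + -(2 * c * ((z : ℝ) - 1) / (z : ℝ)) * (RI + RC)) := by
        rw [← Real.exp_add]; ring_nf
    _ ≤ Real.exp ⟪f i, wbar (yF i)⟫ := by
        apply Real.exp_le_exp.2
        have heq : T + -(2 * c * ((z : ℝ) - 1) / (z : ℝ)) * (RI + RC)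
            = T - ((z : ℝ) - 1) / (z : ℝ) * D := by
          rw [hD]; ring
        rw [heq]
        exact hnum
end

section
/- Assume 0 < α < 1, 0 < β < 1, a > 0, b > 0, c > 0, and that ‖f_i‖ ≤ c, ‖w_j‖ ≤ c, ‖u_k‖ ≤ c for all i, j, k. Assume that for every i: the within-coarse-class instance probability satisfies P_I^C(i) ≥ α, the coarse probability satisfies P_C(i) ≥ β, the within-coarse residual satisfies ∑_{j : y^C(j) = y^C(i), j ≠ i} exp(⟪f_i, w_j⟫) ≥ a, and ∑_{k ≠ y^C(i)} exp(⟪f_i, u_k⟫) ≥ b. Set A = 2c² − 2 log(aα/(1−α)), B = 2c² − 2 log(bβ/(1−β)), and c' = exp(2c(√A + √B)). Then for every i and every j with y^C(j) ≠ y^C(i), one has exp(⟪f_i, w_j⟫) ≤ ((1−β)/β) · c' · exp(⟪f_i, w_i⟫). -/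
set_option maxHeartbeats 1000000

open Finset Real
open scoped RealInnerProductSpace BigOperators

/-- under within-coarse-class instance guarantees and coarse guarantees, for
every `i` and every `j` with `y^C(j) ≠ y^C(i)`,
`exp(⟪f_i, w_j⟫) ≤ ((1−β)/β) · c' · exp(⟪f_i, w_i⟫)` where `c' = exp(2c(√A + √B))`,
`A = 2c² − 2 log(aα/(1−α))` and `B = 2c² − 2 log(bβ/(1−β))`. -/
theorem cross_coarse_inner_upper_bound
    {d n C : ℕ}
    (f w : Fin n → EuclideanSpace ℝ (Fin d))
    (yC : Fin n → Fin C)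
    (u : Fin C → EuclideanSpace ℝ (Fin d))
    (PIC PC : Fin n → ℝ)
    (hPIC : ∀ i, PIC i = Real.exp ⟪f i, w i⟫ /
      ∑ j ∈ Finset.univ.filter (fun j => yC j = yC i), Real.exp ⟪f i, w j⟫)
    (hPC : ∀ i, PC i = Real.exp ⟪f i, u (yC i)⟫ / ∑ k, Real.exp ⟪f i, u k⟫)
    (α β a b c : ℝ)
    (hα : 0 < α) (hα1 : α < 1) (hβ : 0 < β) (hβ1 : β < 1)
    (ha : 0 < a) (hb : 0 < b) (hc : 0 < c)
    (hfnorm : ∀ i, ‖f i‖ ≤ c) (hwnorm : ∀ j, ‖w j‖ ≤ c) (hunorm : ∀ k, ‖u k‖ ≤ c)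
    (hPICα : ∀ i, PIC i ≥ α) (hPCβ : ∀ i, PC i ≥ β)
    (hresI : ∀ i, ∑ j ∈ Finset.univ.filter (fun j => yC j = yC i ∧ j ≠ i),
      Real.exp ⟪f i, w j⟫ ≥ a)
    (hresC : ∀ i, ∑ k ∈ Finset.univ.filter (fun k => k ≠ yC i), Real.exp ⟪f i, u k⟫ ≥ b)
    (A B c' : ℝ)
    (hA : A = 2 * c ^ 2 - 2 * Real.log (a * α / (1 - α)))
    (hB : B = 2 * c ^ 2 - 2 * Real.log (b * β / (1 - β)))
    (hc' : c' = Real.exp (2 * c * (Real.sqrt A + Real.sqrt B))) :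
    ∀ i j : Fin n, yC j ≠ yC i →
      Real.exp ⟪f i, w j⟫ ≤ ((1 - β) / β) * c' * Real.exp ⟪f i, w i⟫ := by
  have h1α : 0 < 1 - α := by linarith
  have h1β : 0 < 1 - β := by linarith
  -- instance bound
  have hinst : ∀ i : Fin n, a * α / (1 - α) ≤ Real.exp ⟪f i, w i⟫ := by
    intro i
    set R := ∑ j ∈ Finset.univ.filter (fun j => yC j = yC i ∧ j ≠ i), Real.exp ⟪f i, w j⟫ with hRdef
    have hsplit : (∑ j ∈ Finset.univ.filter (fun j => yC j = yC i), Real.exp ⟪f i, w j⟫)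
        = Real.exp ⟪f i, w i⟫ + R := by
      have hset : Finset.univ.filter (fun j => yC j = yC i)
          = insert i (Finset.univ.filter (fun j => yC j = yC i ∧ j ≠ i)) := by
        ext x
        simp only [Finset.mem_filter, Finset.mem_insert, Finset.mem_univ, true_and]
        by_cases hx : x = i <;> simp [hx]
      rw [hset, Finset.sum_insert (by simp)]
    have hR0 : 0 ≤ R := Finset.sum_nonneg fun _ _ => (Real.exp_pos _).le
    have hSpos : 0 < ∑ j ∈ Finset.univ.filter (fun j => yC j = yC i), Real.exp ⟪f i, w j⟫ := by
      rw [hsplit]; nlinarith [Real.exp_pos ⟪f i, w i⟫]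
    have hle := hPICα i
    rw [hPIC i, ge_iff_le, le_div_iff₀ hSpos, hsplit] at hle
    have hRa : a ≤ R := hresI i
    rw [div_le_iff₀ h1α]
    nlinarith
  -- coarse bounds
  have hcoarse : ∀ i : Fin n, b * β / (1 - β) ≤ Real.exp ⟪f i, u (yC i)⟫ ∧
      ∀ k, k ≠ yC i → Real.exp ⟪f i, u k⟫ ≤ ((1 - β) / β) * Real.exp ⟪f i, u (yC i)⟫ := by
    intro i
    set R := ∑ k ∈ Finset.univ.filter (fun k => k ≠ yC i), Real.exp ⟪f i, u k⟫ with hRdef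
    have hsplit : (∑ k, Real.exp ⟪f i, u k⟫) = Real.exp ⟪f i, u (yC i)⟫ + R := by
      have hset : (Finset.univ : Finset (Fin C))
          = insert (yC i) (Finset.univ.filter (fun k => k ≠ yC i)) := by
        ext x
        simp only [Finset.mem_filter, Finset.mem_insert, Finset.mem_univ, true_and]
        by_cases hx : x = yC i <;> simp [hx]
      rw [hset, Finset.sum_insert (by simp)]
    have hR0 : 0 ≤ R := Finset.sum_nonneg fun _ _ => (Real.exp_pos _).le
    have hSpos : 0 < ∑ k, Real.exp ⟪f i, u k⟫ := by
      rw [hsplit]; nlinarith [Real.exp_pos ⟪f i, u (yC i)⟫]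
    have hle := hPCβ i
    rw [hPC i, ge_iff_le, le_div_iff₀ hSpos, hsplit] at hle
    have hRb : b ≤ R := hresC i
    constructor
    · rw [div_le_iff₀ h1β]; nlinarith
    · intro k hk
      have hterm : Real.exp ⟪f i, u k⟫ ≤ R := by
        rw [hRdef]
        exact Finset.single_le_sum (f := fun m => Real.exp ⟪f i, u m⟫)
          (fun _ _ => (Real.exp_pos _).le) (Finset.mem_filter.mpr ⟨Finset.mem_univ k, hk⟩)
      rw [div_mul_eq_mul_div, le_div_iff₀ hβ]
      nlinarith
  -- distance bounds
  have hAdist : ∀ i : Fin n, ‖f i - w i‖ ≤ Real.sqrt A := by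
    intro i
    have hpos : 0 < a * α / (1 - α) := by positivity
    have hlog : Real.log (a * α / (1 - α)) ≤ ⟪f i, w i⟫ := by
      calc Real.log (a * α / (1 - α)) ≤ Real.log (Real.exp ⟪f i, w i⟫) :=
            Real.log_le_log hpos (hinst i)
        _ = ⟪f i, w i⟫ := Real.log_exp _
    have hsq : ‖f i - w i‖ ^ 2 ≤ A := by
      have hid := @norm_sub_sq_real (EuclideanSpace ℝ (Fin d)) _ _ (f i) (w i)
      have hf := hfnorm i; have hw := hwnorm i
      have hf0 : (0:ℝ) ≤ ‖f i‖ := norm_nonneg _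
      have hw0 : (0:ℝ) ≤ ‖w i‖ := norm_nonneg _
      rw [hA]; nlinarith
    calc ‖f i - w i‖ = Real.sqrt (‖f i - w i‖ ^ 2) := (Real.sqrt_sq (norm_nonneg _)).symm
      _ ≤ Real.sqrt A := Real.sqrt_le_sqrt hsq
  have hBdist : ∀ i : Fin n, ‖f i - u (yC i)‖ ≤ Real.sqrt B := by
    intro i
    have hpos : 0 < b * β / (1 - β) := by positivity
    have hlog : Real.log (b * β / (1 - β)) ≤ ⟪f i, u (yC i)⟫ := by
      calc Real.log (b * β / (1 - β)) ≤ Real.log (Real.exp ⟪f i, u (yC i)⟫) :=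
            Real.log_le_log hpos (hcoarse i).1
        _ = ⟪f i, u (yC i)⟫ := Real.log_exp _
    have hsq : ‖f i - u (yC i)‖ ^ 2 ≤ B := by
      have hid := @norm_sub_sq_real (EuclideanSpace ℝ (Fin d)) _ _ (f i) (u (yC i))
      have hf := hfnorm i; have hu := hunorm (yC i)
      have hf0 : (0:ℝ) ≤ ‖f i‖ := norm_nonneg _
      have hu0 : (0:ℝ) ≤ ‖u (yC i)‖ := norm_nonneg _
      rw [hB]; nlinarith
    calc ‖f i - u (yC i)‖ = Real.sqrt (‖f i - u (yC i)‖ ^ 2) := (Real.sqrt_sq (norm_nonneg _)).symm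
      _ ≤ Real.sqrt B := Real.sqrt_le_sqrt hsq
  intro i j hij
  set s : ℝ := Real.sqrt A + Real.sqrt B with hs
  -- transfer bound for any index m : ‖w m - u (yC m)‖ ≤ s
  have hwu : ∀ m : Fin n, ‖w m - u (yC m)‖ ≤ s := by
    intro m
    calc ‖w m - u (yC m)‖ = ‖(w m - f m) + (f m - u (yC m))‖ := by
          congr 1; abel
      _ ≤ ‖w m - f m‖ + ‖f m - u (yC m)‖ := norm_add_le _ _
      _ = ‖f m - w m‖ + ‖f m - u (yC m)‖ := by rw [norm_sub_rev]
      _ ≤ Real.sqrt A + Real.sqrt B := add_le_add (hAdist m) (hBdist m)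
  have hinner : ∀ m : Fin n, |⟪f i, w m⟫ - ⟪f i, u (yC m)⟫| ≤ c * s := by
    intro m
    have heq : ⟪f i, w m⟫ - ⟪f i, u (yC m)⟫ = ⟪f i, w m - u (yC m)⟫ := by
      rw [inner_sub_right]
    rw [heq]
    calc |⟪f i, w m - u (yC m)⟫| ≤ ‖f i‖ * ‖w m - u (yC m)‖ := abs_real_inner_le_norm _ _
      _ ≤ c * s := by
          apply mul_le_mul (hfnorm i) (hwu m) (norm_nonneg _) hc.le
  have h1 : ⟪f i, w j⟫ ≤ ⟪f i, u (yC j)⟫ + c * s := by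
    have := abs_le.mp (hinner j); linarith [this.2]
  have h2 : ⟪f i, u (yC i)⟫ ≤ ⟪f i, w i⟫ + c * s := by
    have := abs_le.mp (hinner i); linarith [this.1]
  have e1 : Real.exp ⟪f i, w j⟫ ≤ Real.exp ⟪f i, u (yC j)⟫ * Real.exp (c * s) := by
    rw [← Real.exp_add]; exact Real.exp_le_exp.mpr h1
  have e2 := (hcoarse i).2 (yC j) hij
  have e3 : Real.exp ⟪f i, u (yC i)⟫ ≤ Real.exp ⟪f i, w i⟫ * Real.exp (c * s) := by
    rw [← Real.exp_add]; exact Real.exp_le_exp.mpr h2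
  have hq : 0 < (1 - β) / β := by positivity
  have he : Real.exp (c * s) * Real.exp (c * s) = Real.exp (2 * c * s) := by
    rw [← Real.exp_add]; ring_nf
  have hcs : (0:ℝ) < Real.exp (c * s) := Real.exp_pos _
  rw [hc']
  calc Real.exp ⟪f i, w j⟫ ≤ Real.exp ⟪f i, u (yC j)⟫ * Real.exp (c * s) := e1
    _ ≤ ((1 - β) / β * Real.exp ⟪f i, u (yC i)⟫) * Real.exp (c * s) :=
        mul_le_mul_of_nonneg_right e2 hcs.le
    _ ≤ ((1 - β) / β * (Real.exp ⟪f i, w i⟫ * Real.exp (c * s))) * Real.exp (c * s) := by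
        have := mul_le_mul_of_nonneg_left e3 hq.le
        exact mul_le_mul_of_nonneg_right this hcs.le
    _ = (1 - β) / β * Real.exp (2 * c * s) * Real.exp ⟪f i, w i⟫ := by
        rw [← he]; ring
end

section
/- Assume 0 < α < 1, 0 < β < 1, a > 0, b > 0, c > 0, and that ‖f_i‖ ≤ c, ‖w_j‖ ≤ c, ‖u_k‖ ≤ c for all i, j, k. Assume that for every i: the within-coarse-class instance probability satisfies P_I^C(i) ≥ α, the coarse probability satisfies P_C(i) ≥ β, the within-coarse residual satisfies ∑_{j : y^C(j) = y^C(i), j ≠ i} exp(⟪f_i, w_j⟫) ≥ a, and ∑_{k ≠ y^C(i)} exp(⟪f_i, u_k⟫) ≥ b. Set A = 2c² − 2 log(aα/(1−α)), B = 2c² − 2 log(bβ/(1−β)), c' = exp(2c(√A + √B)), and for each i let M_i = #{ j ∈ {1,…,n} : y^C(j) ≠ y^C(i) }. Then for every i, the full instance-classification probability satisfies P_I(i) ≥ 1 / ( 1/α + (1−β) c' M_i / β ). -/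
open Finset Real
open scoped RealInnerProductSpace BigOperators

private lemma softmax_aux {x r γ a : ℝ} (hγ : 0 < γ) (hγ1 : γ < 1) (ha : 0 < a) (hr : a ≤ r)
    (hp : γ ≤ Real.exp x / (Real.exp x + r)) :
    γ * a / (1 - γ) ≤ Real.exp x ∧ r ≤ (1 - γ) / γ * Real.exp x ∧
      Real.exp x + r ≤ Real.exp x / γ := by
  have hx := Real.exp_pos x
  have hden : 0 < Real.exp x + r := by linarith
  rw [le_div_iff₀ hden] at hp
  refine ⟨?_, ?_, ?_⟩
  · rw [div_le_iff₀ (by linarith)]; nlinarith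
  · rw [div_mul_eq_mul_div, le_div_iff₀ hγ]; nlinarith
  · rw [le_div_iff₀ hγ]; nlinarith

/-- under within-coarse-class instance guarantees and coarse guarantees, for
every `i` the full instance-classification probability satisfies
`P_I(i) ≥ 1 / (1/α + (1−β) c' M_i / β)` where `c' = exp(2c(√A + √B))`,
`A = 2c² − 2 log(aα/(1−α))`, `B = 2c² − 2 log(bβ/(1−β))`, and
`M_i = #{j : y^C(j) ≠ y^C(i)}`. -/
theorem full_instance_prob_lower_bound
    {d n C : ℕ}
    (f w : Fin n → EuclideanSpace ℝ (Fin d))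
    (yC : Fin n → Fin C)
    (u : Fin C → EuclideanSpace ℝ (Fin d))
    (PI PIC PC : Fin n → ℝ)
    (hPI : ∀ i, PI i = Real.exp ⟪f i, w i⟫ / ∑ j, Real.exp ⟪f i, w j⟫)
    (hPIC : ∀ i, PIC i = Real.exp ⟪f i, w i⟫ /
      ∑ j ∈ Finset.univ.filter (fun j => yC j = yC i), Real.exp ⟪f i, w j⟫)
    (hPC : ∀ i, PC i = Real.exp ⟪f i, u (yC i)⟫ / ∑ k, Real.exp ⟪f i, u k⟫)
    (α β a b c : ℝ)
    (hα : 0 < α) (hα1 : α < 1) (hβ : 0 < β) (hβ1 : β < 1)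
    (ha : 0 < a) (hb : 0 < b) (hc : 0 < c)
    (hfnorm : ∀ i, ‖f i‖ ≤ c) (hwnorm : ∀ j, ‖w j‖ ≤ c) (hunorm : ∀ k, ‖u k‖ ≤ c)
    (hPICα : ∀ i, PIC i ≥ α) (hPCβ : ∀ i, PC i ≥ β)
    (hresI : ∀ i, ∑ j ∈ Finset.univ.filter (fun j => yC j = yC i ∧ j ≠ i),
      Real.exp ⟪f i, w j⟫ ≥ a)
    (hresC : ∀ i, ∑ k ∈ Finset.univ.filter (fun k => k ≠ yC i), Real.exp ⟪f i, u k⟫ ≥ b)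
    (A B c' : ℝ)
    (hA : A = 2 * c ^ 2 - 2 * Real.log (a * α / (1 - α)))
    (hB : B = 2 * c ^ 2 - 2 * Real.log (b * β / (1 - β)))
    (hc' : c' = Real.exp (2 * c * (Real.sqrt A + Real.sqrt B)))
    (M : Fin n → ℕ)
    (hM : ∀ i, M i = (Finset.univ.filter (fun j => yC j ≠ yC i)).card) :
    ∀ i : Fin n, PI i ≥ 1 / (1 / α + (1 - β) * c' * (M i : ℝ) / β) := by
  -- decomposition of within-class and coarse sums
  have hSsplit : ∀ i : Fin n, ∑ j ∈ Finset.univ.filter (fun j => yC j = yC i),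
      Real.exp ⟪f i, w j⟫ = Real.exp ⟪f i, w i⟫ +
      ∑ j ∈ Finset.univ.filter (fun j => yC j = yC i ∧ j ≠ i), Real.exp ⟪f i, w j⟫ := by
    intro i
    have hmem : i ∈ Finset.univ.filter (fun j => yC j = yC i) := by simp
    have herase : (Finset.univ.filter (fun j => yC j = yC i)).erase i =
        Finset.univ.filter (fun j => yC j = yC i ∧ j ≠ i) := by
      ext j; simp [Finset.mem_erase]; tauto
    rw [← Finset.add_sum_erase _ _ hmem, herase]
  have hCsplit : ∀ i : Fin n, ∑ k, Real.exp ⟪f i, u k⟫ = Real.exp ⟪f i, u (yC i)⟫ +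
      ∑ k ∈ Finset.univ.filter (fun k => k ≠ yC i), Real.exp ⟪f i, u k⟫ := by
    intro i
    have herase : (Finset.univ : Finset (Fin C)).erase (yC i) =
        Finset.univ.filter (fun k => k ≠ yC i) := by
      ext k; simp [Finset.mem_erase]
    rw [← Finset.add_sum_erase _ _ (Finset.mem_univ (yC i)), herase]
  -- consequences of the probability lower bounds
  have keyI : ∀ i : Fin n, α * a / (1 - α) ≤ Real.exp ⟪f i, w i⟫ ∧
      (∑ j ∈ Finset.univ.filter (fun j => yC j = yC i ∧ j ≠ i), Real.exp ⟪f i, w j⟫)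
        ≤ (1 - α) / α * Real.exp ⟪f i, w i⟫ ∧
      (∑ j ∈ Finset.univ.filter (fun j => yC j = yC i), Real.exp ⟪f i, w j⟫)
        ≤ Real.exp ⟪f i, w i⟫ / α := by
    intro i
    have hp : α ≤ Real.exp ⟪f i, w i⟫ / (Real.exp ⟪f i, w i⟫ +
        ∑ j ∈ Finset.univ.filter (fun j => yC j = yC i ∧ j ≠ i), Real.exp ⟪f i, w j⟫) := by
      have := hPICα i; rw [hPIC i, hSsplit i] at this; exact this
    obtain ⟨h1, h2, h3⟩ := softmax_aux hα hα1 ha (hresI i) hp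
    exact ⟨h1, h2, by rw [hSsplit i]; exact h3⟩
  have keyC : ∀ i : Fin n, β * b / (1 - β) ≤ Real.exp ⟪f i, u (yC i)⟫ ∧
      (∑ k ∈ Finset.univ.filter (fun k => k ≠ yC i), Real.exp ⟪f i, u k⟫)
        ≤ (1 - β) / β * Real.exp ⟪f i, u (yC i)⟫ := by
    intro i
    have hp : β ≤ Real.exp ⟪f i, u (yC i)⟫ / (Real.exp ⟪f i, u (yC i)⟫ +
        ∑ k ∈ Finset.univ.filter (fun k => k ≠ yC i), Real.exp ⟪f i, u k⟫) := by
      have := hPCβ i; rw [hPC i, hCsplit i] at this; exact this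
    obtain ⟨h1, h2, _⟩ := softmax_aux hβ hβ1 hb (hresC i) hp
    exact ⟨h1, h2⟩
  -- log lower bounds
  have hposA : 0 < a * α / (1 - α) := div_pos (mul_pos ha hα) (by linarith)
  have hposB : 0 < b * β / (1 - β) := div_pos (mul_pos hb hβ) (by linarith)
  have key1 : ∀ j, Real.log (a * α / (1 - α)) ≤ ⟪f j, w j⟫ := by
    intro j
    rw [Real.log_le_iff_le_exp hposA]
    have := (keyI j).1
    calc a * α / (1 - α) = α * a / (1 - α) := by ring
    _ ≤ _ := this
  have key2 : ∀ j, Real.log (b * β / (1 - β)) ≤ ⟪f j, u (yC j)⟫ := by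
    intro j
    rw [Real.log_le_iff_le_exp hposB]
    have := (keyC j).1
    calc b * β / (1 - β) = β * b / (1 - β) := by ring
    _ ≤ _ := this
  -- norm bounds
  have hfw : ∀ j, ‖f j - w j‖ ≤ Real.sqrt A := by
    intro j
    have hsq : ‖f j - w j‖ ^ 2 ≤ A := by
      rw [norm_sub_sq_real, hA]
      nlinarith [key1 j, hfnorm j, hwnorm j, norm_nonneg (f j), norm_nonneg (w j), hc.le]
    calc ‖f j - w j‖ = Real.sqrt (‖f j - w j‖ ^ 2) := (Real.sqrt_sq (norm_nonneg _)).symm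
    _ ≤ Real.sqrt A := Real.sqrt_le_sqrt hsq
  have hfu : ∀ j, ‖f j - u (yC j)‖ ≤ Real.sqrt B := by
    intro j
    have hsq : ‖f j - u (yC j)‖ ^ 2 ≤ B := by
      rw [norm_sub_sq_real, hB]
      nlinarith [key2 j, hfnorm j, hunorm (yC j), norm_nonneg (f j), norm_nonneg (u (yC j)), hc.le]
    calc ‖f j - u (yC j)‖ = Real.sqrt (‖f j - u (yC j)‖ ^ 2) := (Real.sqrt_sq (norm_nonneg _)).symm
    _ ≤ Real.sqrt B := Real.sqrt_le_sqrt hsq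
  have hwu : ∀ j, ‖w j - u (yC j)‖ ≤ Real.sqrt A + Real.sqrt B := by
    intro j
    calc ‖w j - u (yC j)‖ = ‖(w j - f j) + (f j - u (yC j))‖ := by rw [sub_add_sub_cancel]
    _ ≤ ‖w j - f j‖ + ‖f j - u (yC j)‖ := norm_add_le _ _
    _ ≤ Real.sqrt A + Real.sqrt B := by
        refine add_le_add ?_ (hfu j)
        rw [norm_sub_rev]; exact hfw j
  have hs : (0:ℝ) ≤ Real.sqrt A + Real.sqrt B := by positivity
  -- inner product bound
  have hinner : ∀ (i : Fin n) (v : EuclideanSpace ℝ (Fin d)),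
      ‖v‖ ≤ Real.sqrt A + Real.sqrt B → ⟪f i, v⟫ ≤ c * (Real.sqrt A + Real.sqrt B) := by
    intro i v hv
    calc ⟪f i, v⟫ ≤ ‖f i‖ * ‖v‖ := real_inner_le_norm _ _
    _ ≤ c * (Real.sqrt A + Real.sqrt B) := mul_le_mul (hfnorm i) hv (norm_nonneg _) hc.le
  intro i
  set s : ℝ := Real.sqrt A + Real.sqrt B with hsdef
  clear_value s
  -- per-term bound for cross-class terms
  have hcross : ∀ j, yC j ≠ yC i →
      Real.exp ⟪f i, w j⟫ ≤ (1 - β) / β * c' * Real.exp ⟪f i, w i⟫ := by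
    intro j hji
    have e1 : ⟪f i, w j⟫ ≤ ⟪f i, u (yC j)⟫ + c * s := by
      have h := hinner i (w j - u (yC j)) (hwu j)
      rw [inner_sub_right] at h; linarith
    have e3 : ⟪f i, u (yC i)⟫ ≤ ⟪f i, w i⟫ + c * s := by
      have h := hinner i (u (yC i) - w i) (by rw [norm_sub_rev]; exact hwu i)
      rw [inner_sub_right] at h; linarith
    have e2 : Real.exp ⟪f i, u (yC j)⟫ ≤ (1 - β) / β * Real.exp ⟪f i, u (yC i)⟫ := by
      refine le_trans ?_ (keyC i).2
      refine Finset.single_le_sum (f := fun k => Real.exp ⟪f i, u k⟫)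
        (fun k _ => (Real.exp_pos _).le) ?_
      simp [hji]
    have hb1 : (0:ℝ) < (1 - β) / β := div_pos (by linarith) hβ
    calc Real.exp ⟪f i, w j⟫ ≤ Real.exp (⟪f i, u (yC j)⟫ + c * s) := Real.exp_le_exp.mpr e1
    _ = Real.exp ⟪f i, u (yC j)⟫ * Real.exp (c * s) := Real.exp_add _ _
    _ ≤ ((1 - β) / β * Real.exp ⟪f i, u (yC i)⟫) * Real.exp (c * s) := by
        exact mul_le_mul_of_nonneg_right e2 (Real.exp_pos _).le
    _ ≤ ((1 - β) / β * Real.exp (⟪f i, w i⟫ + c * s)) * Real.exp (c * s) := by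
        have := Real.exp_le_exp.mpr e3
        have := mul_le_mul_of_nonneg_left this hb1.le
        exact mul_le_mul_of_nonneg_right this (Real.exp_pos _).le
    _ = (1 - β) / β * c' * Real.exp ⟪f i, w i⟫ := by
        rw [hc', Real.exp_add]
        rw [show 2 * c * s = c * s + c * s by ring, Real.exp_add]
        ring
  -- sum over cross-class terms
  have hT : ∑ j ∈ Finset.univ.filter (fun j => yC j ≠ yC i), Real.exp ⟪f i, w j⟫
      ≤ (M i : ℝ) * ((1 - β) / β * c' * Real.exp ⟪f i, w i⟫) := by
    rw [hM i]
    have := Finset.sum_le_card_nsmul (Finset.univ.filter (fun j => yC j ≠ yC i))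
      (fun j => Real.exp ⟪f i, w j⟫) ((1 - β) / β * c' * Real.exp ⟪f i, w i⟫)
      (fun j hj => hcross j (by simpa using hj))
    simpa [nsmul_eq_mul] using this
  -- total sum
  have hsplit : ∑ j, Real.exp ⟪f i, w j⟫ =
      (∑ j ∈ Finset.univ.filter (fun j => yC j = yC i), Real.exp ⟪f i, w j⟫) +
      ∑ j ∈ Finset.univ.filter (fun j => yC j ≠ yC i), Real.exp ⟪f i, w j⟫ := by
    rw [← Finset.sum_filter_add_sum_filter_not Finset.univ (fun j => yC j = yC i)]
  have hc'pos : 0 < c' := hc' ▸ Real.exp_pos _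
  set K : ℝ := 1 / α + (1 - β) * c' * (M i : ℝ) / β with hK
  clear_value K
  have hKpos : 0 < K := by
    have : (0:ℝ) ≤ (1 - β) * c' * (M i : ℝ) / β :=
      div_nonneg (mul_nonneg (mul_nonneg (by linarith) hc'pos.le) (Nat.cast_nonneg _)) hβ.le
    have h1 : (0:ℝ) < 1 / α := by positivity
    linarith
  have hDle : ∑ j, Real.exp ⟪f i, w j⟫ ≤ Real.exp ⟪f i, w i⟫ * K := by
    rw [hsplit]
    have h1 := (keyI i).2.2
    have h2 := hT
    have : Real.exp ⟪f i, w i⟫ / α + (M i : ℝ) * ((1 - β) / β * c' * Real.exp ⟪f i, w i⟫)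
        = Real.exp ⟪f i, w i⟫ * K := by
      rw [hK]; field_simp
    linarith
  have hDpos : 0 < ∑ j, Real.exp ⟪f i, w j⟫ :=
    Finset.sum_pos (fun j _ => Real.exp_pos _) ⟨i, Finset.mem_univ i⟩
  rw [hPI i, ge_iff_le, div_le_div_iff₀ hKpos hDpos]
  nlinarith [hDle, Real.exp_pos ⟪f i, w i⟫]
end

section
/- (Theorem 2) Assume 0 < α < 1, 0 < β < 1, a > 0, b > 0, c > 0, and that ‖f_i‖ ≤ c, ‖w_j‖ ≤ c, ‖u_k‖ ≤ c for all i, j, k. Assume that for every i: the within-coarse-class instance probability satisfies P_I^C(i) ≥ α, the coarse probability satisfies P_C(i) ≥ β, the within-coarse residual satisfies ∑_{j : y^C(j) = y^C(i), j ≠ i} exp(⟪f_i, w_j⟫) ≥ a, and ∑_{k ≠ y^C(i)} exp(⟪f_i, u_k⟫) ≥ b. Set A = 2c² − 2 log(aα/(1−α)), B = 2c² − 2 log(bβ/(1−β)), c' = exp(2c(√A + √B)), and for each i let M_i = #{ j ∈ {1,…,n} : y^C(j) ≠ y^C(i) } and α'_i = 1 / ( 1/α + (1−β) c' M_i / β ).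 Then for every i, the fine-class probability satisfies P_F(i) ≥ α'_i · z · exp( −(2c(z−1)/z) ( √(2c² − 2 log(aα'_i/(1−α'_i))) + √B ) ). -/
/-!
A softmax probability at least `p` whose competitors carry total mass at least `a` forces the
winning exponential to be at least `a p / (1 - p)`; for vectors of norm at most `c` this pins
the representation `x` within `softmaxRadius c a p` of the winning weight. Hence every `f j` is
within `√A` of `w j` and within `√B` of its coarse weight, so `‖w j - u (y^C j)‖ ≤ √A + √B`.
For `j` in another coarse class this bounds `exp ⟪f i, w j⟫` by `(1 - β)/β · c' · exp ⟪f i, w i⟫`,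
which gives the global bound `P_I(i) ≥ α'_i`. Rerunning the radius argument with `α'_i` brings
every weight of the fine class of `i` within `2 (√A'_i + √B)` of `w i`, so the class mean is within
`(z - 1)/z` of that: this controls the numerator of `P_F(i)`, while Jensen's inequality for `exp`
bounds its denominator by `(1/z) ∑_j exp ⟪f i, w j⟫`.
-/

open Finset Real
open scoped RealInnerProductSpace BigOperators

section Softmax

variable {ι : Type*} (s : Finset ι) (g : ι → ℝ) {i : ι} {p : ℝ}

lemma sum_exp_le_of_le_softmax (hp : 0 < p) (h : p ≤ exp (g i) / ∑ j ∈ s, exp (g j)) :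
    ∑ j ∈ s, exp (g j) ≤ exp (g i) / p := by
  have hS : 0 < ∑ j ∈ s, exp (g j) := by
    refine (sum_nonneg fun j _ => (exp_pos _).le).lt_of_ne fun hS => ?_
    rw [← hS, div_zero] at h
    linarith
  rw [le_div_iff₀ hp]
  linarith [(le_div_iff₀ hS).1 h]

lemma sum_erase_exp_le_of_le_softmax [DecidableEq ι] (hi : i ∈ s) (hp : 0 < p)
    (h : p ≤ exp (g i) / ∑ j ∈ s, exp (g j)) :
    ∑ j ∈ s.erase i, exp (g j) ≤ (1 - p) / p * exp (g i) := by
  have hS := sum_exp_le_of_le_softmax s g hp h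
  rw [← add_sum_erase s _ hi] at hS
  have : (1 - p) / p * exp (g i) = exp (g i) / p - exp (g i) := by field_simp
  linarith

lemma le_exp_of_le_softmax [DecidableEq ι] (hi : i ∈ s) (hp : 0 < p) (hp1 : p < 1) {a : ℝ}
    (ha : a ≤ ∑ j ∈ s.erase i, exp (g j)) (h : p ≤ exp (g i) / ∑ j ∈ s, exp (g j)) :
    a * p / (1 - p) ≤ exp (g i) := by
  have hR := ha.trans (sum_erase_exp_le_of_le_softmax s g hi hp h)
  rw [div_mul_eq_mul_div, le_div_iff₀ hp] at hR
  rw [div_le_iff₀ (by linarith)]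
  linarith

lemma one_div_le_softmax_of_class_bounds {κ : Type*} [Fintype ι] [DecidableEq κ] (y : ι → κ)
    (i : ι) {α K : ℝ} (hα : 0 < α) (hK : 0 ≤ K)
    (hclass : α ≤ exp (g i) / ∑ j ∈ univ.filter (fun j => y j = y i), exp (g j))
    (hother : ∀ j, y j ≠ y i → exp (g j) ≤ K * exp (g i)) :
    1 / (1 / α + K * #(univ.filter (fun j => y j ≠ y i))) ≤ exp (g i) / ∑ j, exp (g j) := by
  have hsame := sum_exp_le_of_le_softmax _ g hα hclass
  have hdiff : ∑ j ∈ univ.filter (fun j => y j ≠ y i), exp (g j) ≤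
      #(univ.filter (fun j => y j ≠ y i)) * (K * exp (g i)) := by
    rw [← nsmul_eq_mul]
    exact sum_le_card_nsmul _ _ _ fun j hj => hother j (mem_filter.1 hj).2
  have hS : 0 < ∑ j, exp (g j) := sum_pos (fun j _ => exp_pos _) ⟨i, mem_univ i⟩
  rw [div_le_div_iff₀ (by positivity) hS, ← sum_filter_add_sum_filter_not univ (y · = y i)]
  have : exp (g i) / α = exp (g i) * (1 / α) := by ring
  nlinarith

end Softmax

-- In the notation of the theorem, `√A = softmaxRadius c a α` and `√B = softmaxRadius c b β`.
noncomputable def softmaxRadius (c a p : ℝ) : ℝ := √(2 * c ^ 2 - 2 * log (a * p / (1 - p)))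

lemma softmaxRadius_anti {c a p q : ℝ} (ha : 0 < a) (hp : 0 < p) (hpq : p ≤ q) (hq : q < 1) :
    softmaxRadius c a q ≤ softmaxRadius c a p := by
  have hlog : log (a * p / (1 - p)) ≤ log (a * q / (1 - q)) :=
    log_le_log (div_pos (mul_pos ha hp) (sub_pos.2 (hpq.trans_lt hq)))
      (div_le_div₀ (by nlinarith) (by gcongr) (by linarith) (by linarith))
  unfold softmaxRadius
  gcongr

section InnerProduct

variable {E ι κ : Type*} [NormedAddCommGroup E] [InnerProductSpace ℝ E] {c : ℝ}

lemma norm_sub_le_sqrt_of_le_exp_inner {x y : E} (hx : ‖x‖ ≤ c) (hy : ‖y‖ ≤ c) {t : ℝ}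
    (ht : 0 < t) (h : t ≤ exp ⟪x, y⟫) : ‖x - y‖ ≤ √(2 * c ^ 2 - 2 * log t) := by
  have hlog : log t ≤ ⟪x, y⟫ := (log_le_iff_le_exp ht).2 h
  have hsq : ‖x - y‖ ^ 2 ≤ 2 * c ^ 2 - 2 * log t := by
    nlinarith [norm_sub_sq_real x y, norm_nonneg x, norm_nonneg y]
  exact le_sqrt_of_sq_le hsq

lemma exp_inner_le_exp_inner_mul {x y y' : E} (hx : ‖x‖ ≤ c) {r : ℝ} (h : ‖y - y'‖ ≤ r) :
    exp ⟪x, y⟫ ≤ exp ⟪x, y'⟫ * exp (c * r) := by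
  rw [← exp_add, exp_le_exp]
  have hxy : ⟪x, y - y'⟫ ≤ c * r :=
    (real_inner_le_norm _ _).trans (mul_le_mul hx h (norm_nonneg _) ((norm_nonneg x).trans hx))
  rw [inner_sub_right] at hxy
  linarith

lemma norm_sub_le_softmaxRadius [DecidableEq ι] (s : Finset ι) (x : E) (v : ι → E) {i : ι}
    (hi : i ∈ s) {a p : ℝ} (hx : ‖x‖ ≤ c) (hv : ‖v i‖ ≤ c) (ha : 0 < a) (hp : 0 < p)
    (hp1 : p < 1) (hres : a ≤ ∑ j ∈ s.filter (· ≠ i), exp ⟪x, v j⟫)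
    (h : p ≤ exp ⟪x, v i⟫ / ∑ j ∈ s, exp ⟪x, v j⟫) :
    ‖x - v i‖ ≤ softmaxRadius c a p :=
  norm_sub_le_sqrt_of_le_exp_inner hx hv (div_pos (mul_pos ha hp) (sub_pos.2 hp1))
    (le_exp_of_le_softmax s (fun j => ⟪x, v j⟫) hi hp hp1 (filter_ne' s i ▸ hres) h)

lemma exp_inner_le_of_ne_class [Fintype κ] [DecidableEq κ] (x : E) (u : κ → E) {k k₀ : κ}
    (hk : k ≠ k₀) {p r : ℝ} (hx : ‖x‖ ≤ c) (hp : 0 < p)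
    (hP : p ≤ exp ⟪x, u k₀⟫ / ∑ l, exp ⟪x, u l⟫) {v v₀ : E} (hv : ‖v - u k‖ ≤ r)
    (hv₀ : ‖v₀ - u k₀‖ ≤ r) :
    exp ⟪x, v⟫ ≤ (1 - p) / p * exp (2 * c * r) * exp ⟪x, v₀⟫ := by
  have hk_le : exp ⟪x, u k⟫ ≤ (1 - p) / p * exp ⟪x, u k₀⟫ :=
    (single_le_sum (f := fun l => exp ⟪x, u l⟫) (fun _ _ => (exp_pos _).le)
      (mem_erase.2 ⟨hk, mem_univ k⟩)).trans
      (sum_erase_exp_le_of_le_softmax univ (fun l => ⟪x, u l⟫) (mem_univ k₀) hp hP)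
  have hk₀_le := exp_inner_le_exp_inner_mul hx ((norm_sub_rev _ _).trans_le hv₀)
  have hp1 : 0 ≤ (1 - p) / p :=
    (pos_of_mul_pos_left ((exp_pos _).trans_le hk_le) (exp_pos _).le).le
  calc exp ⟪x, v⟫ ≤ exp ⟪x, u k⟫ * exp (c * r) := exp_inner_le_exp_inner_mul hx hv
    _ ≤ (1 - p) / p * exp ⟪x, u k₀⟫ * exp (c * r) := by gcongr
    _ ≤ (1 - p) / p * (exp ⟪x, v₀⟫ * exp (c * r)) * exp (c * r) := by gcongr
    _ = (1 - p) / p * exp (2 * c * r) * exp ⟪x, v₀⟫ := by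
      rw [mul_assoc, mul_assoc, ← exp_add]
      ring_nf

lemma one_div_le_softmax_of_coarse_softmax [Fintype ι] [Fintype κ] [DecidableEq κ] (x : E)
    (v : ι → E) (y : ι → κ) (u : κ → E) (i : ι) {α β r : ℝ} (hα : 0 < α) (hβ : 0 < β)
    (hβ1 : β ≤ 1) (hx : ‖x‖ ≤ c) (hvu : ∀ j, ‖v j - u (y j)‖ ≤ r)
    (hclass : α ≤ exp ⟪x, v i⟫ / ∑ j ∈ univ.filter (fun j => y j = y i), exp ⟪x, v j⟫)
    (hcoarse : β ≤ exp ⟪x, u (y i)⟫ / ∑ k, exp ⟪x, u k⟫) :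
    1 / (1 / α + (1 - β) * exp (2 * c * r) * #(univ.filter (fun j => y j ≠ y i)) / β) ≤
      exp ⟪x, v i⟫ / ∑ j, exp ⟪x, v j⟫ := by
  have := one_div_le_softmax_of_class_bounds (fun j => ⟪x, v j⟫) y i hα
    (mul_nonneg (div_nonneg (sub_nonneg.2 hβ1) hβ.le) (exp_pos _).le) hclass
    fun _ hj => exp_inner_le_of_ne_class x u hj hx hβ hcoarse (hvu _) (hvu i)
  rwa [mul_div_right_comm, mul_div_right_comm (1 - β)]

lemma norm_mean_sub_le [DecidableEq ι] (s : Finset ι) (v : ι → E) {z : ℕ} (hs : #s = z)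
    {i : ι} (hi : i ∈ s) {r : ℝ} (h : ∀ j ∈ s, ‖v j - v i‖ ≤ r) :
    ‖(z : ℝ)⁻¹ • ∑ j ∈ s, v j - v i‖ ≤ ((z : ℝ) - 1) / z * r := by
  have hz : (z : ℝ) ≠ 0 := by rw [← hs]; exact_mod_cast (card_pos.2 ⟨i, hi⟩).ne'
  have hmean : (z : ℝ)⁻¹ • ∑ j ∈ s, v j - v i = (z : ℝ)⁻¹ • ∑ j ∈ s.erase i, (v j - v i) := by
    rw [sum_erase _ (sub_self _), sum_sub_distrib, sum_const, hs, smul_sub,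
      ← Nat.cast_smul_eq_nsmul ℝ, inv_smul_smul₀ hz]
  have hcard : (#(s.erase i) : ℝ) = z - 1 := by rw [cast_card_erase_of_mem hi, hs]
  calc ‖(z : ℝ)⁻¹ • ∑ j ∈ s, v j - v i‖
      ≤ (z : ℝ)⁻¹ * ∑ j ∈ s.erase i, ‖v j - v i‖ := by
        rw [hmean, norm_smul, norm_inv, Real.norm_natCast]
        gcongr
        exact norm_sum_le _ _
    _ ≤ (z : ℝ)⁻¹ * (#(s.erase i) • r) := by
        gcongr
        exact sum_le_card_nsmul _ _ _ fun j hj => h j (mem_of_mem_erase hj)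
    _ = ((z : ℝ) - 1) / z * r := by rw [nsmul_eq_mul, hcard]; ring

lemma exp_inner_mean_le (s : Finset ι) (x : E) (w : ι → E) {z : ℕ} (hs : #s = z) (hz : 0 < z) :
    exp ⟪x, (z : ℝ)⁻¹ • ∑ j ∈ s, w j⟫ ≤ (z : ℝ)⁻¹ * ∑ j ∈ s, exp ⟪x, w j⟫ := by
  have hJ := convexOn_exp.map_sum_le (t := s) (w := fun _ => (z : ℝ)⁻¹) (p := fun j => ⟪x, w j⟫)
    (fun _ _ => by positivity) (by rw [sum_const, hs, nsmul_eq_mul]; field_simp)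
    (fun _ _ => Set.mem_univ _)
  simpa only [real_inner_smul_right, inner_sum, smul_eq_mul, ← mul_sum] using hJ

variable [Fintype ι] [Fintype κ] [DecidableEq κ]

lemma sum_exp_inner_mean_le (x : E) (w : ι → E) (y : ι → κ) {z : ℕ} (hz : 0 < z)
    (hcard : ∀ s, #(univ.filter (fun j => y j = s)) = z) (wbar : κ → E)
    (hwbar : ∀ s, wbar s = (z : ℝ)⁻¹ • ∑ j ∈ univ.filter (fun j => y j = s), w j) :
    ∑ s, exp ⟪x, wbar s⟫ ≤ (z : ℝ)⁻¹ * ∑ j, exp ⟪x, w j⟫ := by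
  calc ∑ s, exp ⟪x, wbar s⟫
      ≤ ∑ s, (z : ℝ)⁻¹ * ∑ j ∈ univ.filter (fun j => y j = s), exp ⟪x, w j⟫ :=
        sum_le_sum fun s _ => hwbar s ▸ exp_inner_mean_le _ x w (hcard s) hz
    _ = (z : ℝ)⁻¹ * ∑ j, exp ⟪x, w j⟫ := by rw [← mul_sum, sum_fiberwise]

lemma softmax_mul_le_softmax_mean (x : E) (w : ι → E) (y : ι → κ) {z : ℕ} (hz : 0 < z)
    (hcard : ∀ s, #(univ.filter (fun j => y j = s)) = z) (wbar : κ → E)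
    (hwbar : ∀ s, wbar s = (z : ℝ)⁻¹ • ∑ j ∈ univ.filter (fun j => y j = s), w j) (i : ι)
    {r : ℝ} (hx : ‖x‖ ≤ c) (hr : ∀ j, y j = y i → ‖w j - w i‖ ≤ r) :
    (exp ⟪x, w i⟫ / ∑ j, exp ⟪x, w j⟫) * z * exp (-(c * (((z : ℝ) - 1) / z * r))) ≤
      exp ⟪x, wbar (y i)⟫ / ∑ s, exp ⟪x, wbar s⟫ := by
  classical
  have hδ : ‖w i - wbar (y i)‖ ≤ ((z : ℝ) - 1) / z * r := by
    rw [norm_sub_rev, hwbar]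
    exact norm_mean_sub_le _ w (hcard (y i)) (by simp) fun j hj => hr j (mem_filter.1 hj).2
  have hnum : exp ⟪x, w i⟫ * exp (-(c * (((z : ℝ) - 1) / z * r))) ≤ exp ⟪x, wbar (y i)⟫ := by
    rw [exp_neg, ← div_eq_mul_inv, div_le_iff₀ (exp_pos _)]
    exact exp_inner_le_exp_inner_mul hx hδ
  have hD : 0 < ∑ s, exp ⟪x, wbar s⟫ := sum_pos (fun s _ => exp_pos _) ⟨y i, mem_univ _⟩
  calc (exp ⟪x, w i⟫ / ∑ j, exp ⟪x, w j⟫) * z * exp (-(c * (((z : ℝ) - 1) / z * r)))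
      = exp ⟪x, w i⟫ * exp (-(c * (((z : ℝ) - 1) / z * r))) /
          ((z : ℝ)⁻¹ * ∑ j, exp ⟪x, w j⟫) := by
        field_simp
    _ ≤ exp ⟪x, wbar (y i)⟫ / ((z : ℝ)⁻¹ * ∑ j, exp ⟪x, w j⟫) := by gcongr
    _ ≤ exp ⟪x, wbar (y i)⟫ / ∑ s, exp ⟪x, wbar s⟫ :=
        div_le_div_of_nonneg_left (exp_pos _).le hD
          (sum_exp_inner_mean_le x w y hz hcard wbar hwbar)

end InnerProduct

theorem theorem2_fine_prob_lower_bound_general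
    {d n F C z : ℕ} (hz : 0 < z)
    (f w : Fin n → EuclideanSpace ℝ (Fin d))
    (yF : Fin n → Fin F)
    (hcard : ∀ s : Fin F, (Finset.univ.filter (fun j => yF j = s)).card = z)
    (wbar : Fin F → EuclideanSpace ℝ (Fin d))
    (hwbar : ∀ s : Fin F,
      wbar s = (z : ℝ)⁻¹ • ∑ j ∈ Finset.univ.filter (fun j => yF j = s), w j)
    (yC : Fin n → Fin C)
    (hcompat : ∀ i j : Fin n, yF i = yF j → yC i = yC j)
    (u : Fin C → EuclideanSpace ℝ (Fin d))
    (PIC PC PF : Fin n → ℝ)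
    (hPIC : ∀ i, PIC i = Real.exp ⟪f i, w i⟫ /
      ∑ j ∈ Finset.univ.filter (fun j => yC j = yC i), Real.exp ⟪f i, w j⟫)
    (hPC : ∀ i, PC i = Real.exp ⟪f i, u (yC i)⟫ / ∑ k, Real.exp ⟪f i, u k⟫)
    (hPF : ∀ i, PF i = Real.exp ⟪f i, wbar (yF i)⟫ / ∑ s, Real.exp ⟪f i, wbar s⟫)
    (α β a b c : ℝ)
    (hα : 0 < α) (hα1 : α < 1) (hβ : 0 < β) (hβ1 : β < 1)
    (ha : 0 < a) (hb : 0 < b)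
    (hfnorm : ∀ i, ‖f i‖ ≤ c) (hwnorm : ∀ j, ‖w j‖ ≤ c) (hunorm : ∀ k, ‖u k‖ ≤ c)
    (hPICα : ∀ i, PIC i ≥ α) (hPCβ : ∀ i, PC i ≥ β)
    (hresI : ∀ i, ∑ j ∈ Finset.univ.filter (fun j => yC j = yC i ∧ j ≠ i),
      Real.exp ⟪f i, w j⟫ ≥ a)
    (hresC : ∀ i, ∑ k ∈ Finset.univ.filter (fun k => k ≠ yC i), Real.exp ⟪f i, u k⟫ ≥ b)
    (A B c' : ℝ)
    (hA : A = 2 * c ^ 2 - 2 * Real.log (a * α / (1 - α)))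
    (hB : B = 2 * c ^ 2 - 2 * Real.log (b * β / (1 - β)))
    (hc' : c' = Real.exp (2 * c * (Real.sqrt A + Real.sqrt B)))
    (M : Fin n → ℕ)
    (hM : ∀ i, M i = (Finset.univ.filter (fun j => yC j ≠ yC i)).card)
    (α' : Fin n → ℝ)
    (hα' : ∀ i, α' i = 1 / (1 / α + (1 - β) * c' * (M i : ℝ) / β)) :
    ∀ i : Fin n,
      PF i ≥ α' i * (z : ℝ) *
        Real.exp (-(2 * c * ((z : ℝ) - 1) / (z : ℝ)) *
          (Real.sqrt (2 * c ^ 2 - 2 * Real.log (a * α' i / (1 - α' i))) +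
            Real.sqrt B)) := by
  intro i
  simp only [hPIC, hPC, ge_iff_le] at hPICα hPCβ
  have hfw : ∀ j, ‖f j - w j‖ ≤ √A := fun j =>
    hA ▸ norm_sub_le_softmaxRadius _ (f j) w (by simp) (hfnorm j) (hwnorm j) ha hα hα1
      (by rw [filter_filter]; exact hresI j) (hPICα j)
  have hfu : ∀ j, ‖f j - u (yC j)‖ ≤ √B := fun j =>
    hB ▸ norm_sub_le_softmaxRadius univ (f j) u (mem_univ _) (hfnorm j) (hunorm _) hb hβ hβ1
      (hresC j) (hPCβ j)
  have hwu : ∀ j, ‖w j - u (yC j)‖ ≤ √A + √B := fun j =>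
    (norm_sub_le_norm_sub_add_norm_sub _ (f j) _).trans
      (add_le_add ((norm_sub_rev _ _).trans_le (hfw j)) (hfu j))
  have hPIα' : α' i ≤ exp ⟪f i, w i⟫ / ∑ j, exp ⟪f i, w j⟫ := hα' i ▸ hM i ▸ hc' ▸
    one_div_le_softmax_of_coarse_softmax (f i) w yC u i hα hβ hβ1.le (hfnorm i) hwu
      (hPICα i) (hPCβ i)
  have ht : 0 ≤ (1 - β) * c' * (M i : ℝ) / β := by rw [hc']; have := sub_pos.2 hβ1; positivity
  have hα'pos : 0 < α' i := by rw [hα' i]; positivity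
  have hα'α : α' i ≤ α := by rw [hα' i, one_div_le (by positivity) hα]; linarith
  have hfwi : ‖f i - w i‖ ≤ softmaxRadius c a (α' i) :=
    norm_sub_le_softmaxRadius univ (f i) w (mem_univ i) (hfnorm i) (hwnorm i) ha hα'pos
      (hα'α.trans_lt hα1) ((hresI i).trans (sum_le_sum_of_subset_of_nonneg
        (monotone_filter_right _ fun _ _ => And.right) fun _ _ _ => (exp_pos _).le)) hPIα'
  have hAα' : √A ≤ softmaxRadius c a (α' i) := hA ▸ softmaxRadius_anti ha hα'pos hα'α hα1
  have hww : ∀ j, yF j = yF i → ‖w j - w i‖ ≤ 2 * (softmaxRadius c a (α' i) + √B) := by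
    intro j hj
    have := norm_sub_le_norm_sub_add_norm_sub (w j) (u (yC i)) (w i)
    have := norm_sub_le_norm_sub_add_norm_sub (u (yC i)) (f i) (w i)
    linarith [hcompat j i hj ▸ hwu j, norm_sub_rev (u (yC i)) (f i), hfu i]
  rw [hPF i, ge_iff_le]
  refine le_trans ?_ (softmax_mul_le_softmax_mean (f i) w yF hz hcard wbar hwbar i (hfnorm i) hww)
  gcongr ?_ * _ * exp ?_
  unfold softmaxRadius
  exact le_of_eq (by ring)

/-- Theorem 2: under within-coarse-class instance guarantees and coarse
guarantees, for every `i` the fine-class probability satisfies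
`P_F(i) ≥ α'_i · z · exp(−(2c(z−1)/z)(√(2c² − 2 log(aα'_i/(1−α'_i))) + √B))` where
`α'_i = 1 / (1/α + (1−β) c' M_i / β)`, `c' = exp(2c(√A + √B))`,
`A = 2c² − 2 log(aα/(1−α))`, `B = 2c² − 2 log(bβ/(1−β))`, and
`M_i = #{j : y^C(j) ≠ y^C(i)}`. -/
theorem theorem2_fine_prob_lower_bound
    {d n F C z : ℕ} (hz : 0 < z) (hzF : z * F = n)
    (f w : Fin n → EuclideanSpace ℝ (Fin d))
    (yF : Fin n → Fin F)
    (hcard : ∀ s : Fin F, (Finset.univ.filter (fun j => yF j = s)).card = z)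
    (wbar : Fin F → EuclideanSpace ℝ (Fin d))
    (hwbar : ∀ s : Fin F,
      wbar s = (z : ℝ)⁻¹ • ∑ j ∈ Finset.univ.filter (fun j => yF j = s), w j)
    (yC : Fin n → Fin C)
    (hcompat : ∀ i j : Fin n, yF i = yF j → yC i = yC j)
    (u : Fin C → EuclideanSpace ℝ (Fin d))
    (PI PIC PC PF : Fin n → ℝ)
    (hPI : ∀ i, PI i = Real.exp ⟪f i, w i⟫ / ∑ j, Real.exp ⟪f i, w j⟫)
    (hPIC : ∀ i, PIC i = Real.exp ⟪f i, w i⟫ /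
      ∑ j ∈ Finset.univ.filter (fun j => yC j = yC i), Real.exp ⟪f i, w j⟫)
    (hPC : ∀ i, PC i = Real.exp ⟪f i, u (yC i)⟫ / ∑ k, Real.exp ⟪f i, u k⟫)
    (hPF : ∀ i, PF i = Real.exp ⟪f i, wbar (yF i)⟫ / ∑ s, Real.exp ⟪f i, wbar s⟫)
    (α β a b c : ℝ)
    (hα : 0 < α) (hα1 : α < 1) (hβ : 0 < β) (hβ1 : β < 1)
    (ha : 0 < a) (hb : 0 < b) (hc : 0 < c)
    (hfnorm : ∀ i, ‖f i‖ ≤ c) (hwnorm : ∀ j, ‖w j‖ ≤ c) (hunorm : ∀ k, ‖u k‖ ≤ c)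
    (hPICα : ∀ i, PIC i ≥ α) (hPCβ : ∀ i, PC i ≥ β)
    (hresI : ∀ i, ∑ j ∈ Finset.univ.filter (fun j => yC j = yC i ∧ j ≠ i),
      Real.exp ⟪f i, w j⟫ ≥ a)
    (hresC : ∀ i, ∑ k ∈ Finset.univ.filter (fun k => k ≠ yC i), Real.exp ⟪f i, u k⟫ ≥ b)
    (A B c' : ℝ)
    (hA : A = 2 * c ^ 2 - 2 * Real.log (a * α / (1 - α)))
    (hB : B = 2 * c ^ 2 - 2 * Real.log (b * β / (1 - β)))
    (hc' : c' = Real.exp (2 * c * (Real.sqrt A + Real.sqrt B)))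
    (M : Fin n → ℕ)
    (hM : ∀ i, M i = (Finset.univ.filter (fun j => yC j ≠ yC i)).card)
    (α' : Fin n → ℝ)
    (hα' : ∀ i, α' i = 1 / (1 / α + (1 - β) * c' * (M i : ℝ) / β)) :
    ∀ i : Fin n,
      PF i ≥ α' i * (z : ℝ) *
        Real.exp (-(2 * c * ((z : ℝ) - 1) / (z : ℝ)) *
          (Real.sqrt (2 * c ^ 2 - 2 * Real.log (a * α' i / (1 - α' i))) +
            Real.sqrt B)) :=
  theorem2_fine_prob_lower_bound_general hz f w yF hcard wbar hwbar yC hcompat u PIC PC PF hPIC hPC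
    hPF α β a b c hα hα1 hβ hβ1 ha hb hfnorm hwnorm hunorm hPICα hPCβ hresI hresC A B c' hA hB hc' M
    hM α' hα'
end
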